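/- arXiv:2604.01347 — 7 statements merged into one kernel-verified Lean document; each statement's English description precedes it below -/
import Mathlib

section
/- Let p, r be positive integers and let M, H ∈ ℝ^{(p+r)×(p+r)} be symmetric matrices, with H partitioned as H = [[H₁₁, H₁₂],[H₁₂ᵀ, H₂₂]] where H₁₁ ∈ ℝ^{p×p}, H₁₂ ∈ ℝ^{p×r}, H₂₂ ∈ ℝ^{r×r}. Define S_H := {Z ∈ ℝ^{r×p} : col(I_p, Z)ᵀ H col(I_p, Z) ⪰ 0}. Assume H₂₂ ≺ 0 and S_H ≠ ∅. Then col(I_p, Z)ᵀ M col(I_p, Z) ≻ 0 for all Z ∈ S_H if and only if there exists a scalar α ≥ 0 such that M − αH ≻ 0. -/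
/-!
Completing the square in the negative definite block `H₂₂` gives
`col(I, Z)ᵀ H col(I, Z) = S + (Z + K)ᵀ H₂₂ (Z + K)` with `K = H₂₂⁻¹ H₂₁` and `S` the Schur
complement of `H₂₂`, so `S ⪰ 0` as soon as `S_H ≠ ∅`. If `ξ = (x, z)` satisfies `ξᵀ H ξ ≥ 0`, a
rank-one correction of `-K` (chosen by Cauchy–Schwarz for `S`) gives `Z ∈ S_H` with `Z x = z`, and
then `x ≠ 0` unless `ξ = 0`. So the matrix condition says that `ξᵀ M ξ > 0` whenever `ξ ≠ 0` and
`ξᵀ H ξ ≥ 0`, and the strict S-lemma turns this into `M - α H ≻ 0`.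

The S-lemma rests on Dines' theorem: the joint range of two real quadratic forms is convex, since
along `θ ↦ cos θ • x + sin θ • y` the pair of values at `θ + π/2` is the sum of the values at `x`
and `y` minus the pair at `θ`. A line separating this convex cone from the open quadrant
`{a < 0 < b}` gives the multiplier when `H` takes a positive value; otherwise `H ⪯ 0`, and the
multiplier comes from the minima of the forms on the unit sphere.
-/

open Matrix Set

theorem Prod.exists_smul_eq_of_mul_eq_mul {s v : ℝ × ℝ} (hs : s ≠ 0)
    (h : s.1 * v.2 = s.2 * v.1) : ∃ t : ℝ, v = t • s := by
  rcases ne_or_eq s.1 0 with h1 | h1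
  · refine ⟨v.1 / s.1, Prod.ext (by simp [h1]) ?_⟩
    simp only [Prod.smul_snd, smul_eq_mul]
    field_simp
    linarith
  · have h2 : s.2 ≠ 0 := fun h2 => hs (Prod.ext h1 h2)
    refine ⟨v.2 / s.2, Prod.ext ?_ (by simp [h2])⟩
    simp only [Prod.smul_fst, smul_eq_mul, h1, mul_zero]
    simpa [h1, h2] using h.symm

theorem exists_pos_smul_eq_of_map_add_eq_sub {g : ℝ → ℝ × ℝ} (hg : Continuous g)
    {s : ℝ × ℝ} (hs : s ≠ 0) (τ : ℝ) (hgτ : ∀ θ, g (θ + τ) = s - g θ) :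
    ∃ θ, ∃ t : ℝ, 0 < t ∧ g θ = t • s := by
  set h : ℝ → ℝ := fun θ => s.1 * (g θ).2 - s.2 * (g θ).1
  have hτ : h τ = -h 0 := by
    have := hgτ 0
    rw [zero_add] at this
    simp only [h, this, Prod.fst_sub, Prod.snd_sub]
    ring
  obtain ⟨θ, -, hθ⟩ : 0 ∈ h '' uIcc 0 τ := by
    refine intermediate_value_uIcc (by fun_prop) ?_
    rw [hτ, mem_uIcc]
    rcases le_total (h 0) 0 with h0 | h0
    · exact Or.inl ⟨h0, by linarith⟩
    · exact Or.inr ⟨by linarith, h0⟩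
  obtain ⟨t, ht⟩ := Prod.exists_smul_eq_of_mul_eq_mul hs (sub_eq_zero.1 hθ)
  rcases lt_or_ge 0 t with htpos | htneg
  · exact ⟨θ, t, htpos, ht⟩
  · exact ⟨θ + τ, 1 - t, by linarith, by rw [hgτ, ht, sub_smul, one_smul]⟩

theorem nonneg_of_forall_le_mul {u a : ℝ} (h : ∀ t : ℝ, 0 < t → u ≤ t * a) : 0 ≤ a := by
  by_contra! ha
  have ht : (|u| + 1) / -a * a = -(|u| + 1) := by field_simp [ha.ne]
  have := h ((|u| + 1) / -a) (div_pos (by positivity) (neg_pos.2 ha))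
  linarith [neg_abs_le u]

theorem exists_nonneg_mul_snd_le_fst {W : Set (ℝ × ℝ)} (hconv : Convex ℝ W)
    (hcone : ∀ w ∈ W, ∀ t : ℝ, 0 ≤ t → t • w ∈ W) (hdisj : Disjoint (Iio 0 ×ˢ Ioi 0) W)
    {w₀ : ℝ × ℝ} (hw₀ : w₀ ∈ W) (hw₀pos : 0 < w₀.2) :
    ∃ α : ℝ, 0 ≤ α ∧ ∀ w ∈ W, α * w.2 ≤ w.1 := by
  obtain ⟨f, u, hfQ, hfW⟩ := geometric_hahn_banach_open ((convex_Iio 0).prod (convex_Ioi 0))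
    (isOpen_Iio.prod isOpen_Ioi) hconv hdisj
  have hf : ∀ w : ℝ × ℝ, f w = w.1 * f (1, 0) + w.2 * f (0, 1) := fun w => by
    conv_lhs => rw [show w = w.1 • ((1 : ℝ), (0 : ℝ)) + w.2 • ((0 : ℝ), (1 : ℝ)) by simp]
    rw [map_add, map_smul, map_smul, smul_eq_mul, smul_eq_mul]
  have hu : u ≤ 0 := by simpa using hfW _ (hcone w₀ hw₀ 0 le_rfl)
  have hW : ∀ w ∈ W, 0 ≤ f w := fun w hw =>
    nonneg_of_forall_le_mul fun t ht => by simpa using hfW _ (hcone w hw t ht.le)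
  -- `f ≤ 0` on the open quadrant since it is a cone, hence on its closure
  have hQ : ∀ q ∈ Iic (0 : ℝ) ×ˢ Ici 0, f q ≤ 0 := by
    rw [← closure_Iio, ← closure_Ioi, ← closure_prod_eq]
    refine (isClosed_le f.continuous continuous_const).closure_subset_iff.2 fun q hq => ?_
    refine neg_nonneg.1 (nonneg_of_forall_le_mul (u := -u) fun t ht => ?_)
    have := hfQ (t • q) ⟨mul_neg_of_pos_of_neg ht hq.1, mul_pos ht hq.2⟩
    rw [map_smul, smul_eq_mul] at this
    linarith
  have hc : 0 ≤ f (1, 0) := by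
    have := hQ (-1, 0) (by simp)
    rw [hf] at this
    linarith
  have hd : f (0, 1) ≤ 0 := hQ (0, 1) (by simp)
  have hcd : f (0, 1) < f (1, 0) := by
    have := hfQ (-1, 1) (by simp)
    rw [hf] at this
    linarith
  have hcpos : 0 < f (1, 0) := by
    refine hc.lt_of_ne fun hc0 => ?_
    have := hW w₀ hw₀
    rw [hf, ← hc0] at this
    nlinarith
  refine ⟨-f (0, 1) / f (1, 0), div_nonneg (neg_nonneg.2 hd) hcpos.le, fun w hw => ?_⟩
  have := hW w hw
  rw [hf] at this
  rw [div_mul_eq_mul_div, div_le_iff₀ hcpos]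
  linarith

namespace Matrix

variable {n : Type*} [Fintype n]

theorem smul_dotProduct_mulVec_smul (A : Matrix n n ℝ) (c : ℝ) (x : n → ℝ) :
    (c • x) ⬝ᵥ A *ᵥ (c • x) = c ^ 2 * (x ⬝ᵥ A *ᵥ x) := by
  simp only [mulVec_smul, dotProduct_smul, smul_dotProduct, smul_eq_mul]
  ring

theorem continuous_dotProduct_mulVec_self (A : Matrix n n ℝ) :
    Continuous fun x : n → ℝ => x ⬝ᵥ A *ᵥ x :=
  continuous_id.dotProduct (continuous_const.matrix_mulVec continuous_id)

theorem dotProduct_self_pos {x : n → ℝ} (hx : x ≠ 0) : 0 < x ⬝ᵥ x := by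
  simpa using dotProduct_star_self_pos_iff.2 hx

open Real in
theorem dotProduct_mulVec_cos_sin_add_pi_div_two (A : Matrix n n ℝ) (x y : n → ℝ) (θ : ℝ) :
    (cos (θ + π / 2) • x + sin (θ + π / 2) • y) ⬝ᵥ
        A *ᵥ (cos (θ + π / 2) • x + sin (θ + π / 2) • y) =
      x ⬝ᵥ A *ᵥ x + y ⬝ᵥ A *ᵥ y -
        (cos θ • x + sin θ • y) ⬝ᵥ A *ᵥ (cos θ • x + sin θ • y) := by
  simp only [cos_add_pi_div_two, sin_add_pi_div_two, mulVec_add, mulVec_smul, dotProduct_add,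
    add_dotProduct, dotProduct_smul, smul_dotProduct, smul_eq_mul]
  linear_combination (x ⬝ᵥ A *ᵥ x + y ⬝ᵥ A *ᵥ y) * sin_sq_add_cos_sq θ

open Real in
theorem exists_dotProduct_mulVec_eq_add (A B : Matrix n n ℝ) (x y : n → ℝ) :
    ∃ z : n → ℝ, z ⬝ᵥ A *ᵥ z = x ⬝ᵥ A *ᵥ x + y ⬝ᵥ A *ᵥ y ∧
      z ⬝ᵥ B *ᵥ z = x ⬝ᵥ B *ᵥ x + y ⬝ᵥ B *ᵥ y := by
  set s : ℝ × ℝ := (x ⬝ᵥ A *ᵥ x + y ⬝ᵥ A *ᵥ y, x ⬝ᵥ B *ᵥ x + y ⬝ᵥ B *ᵥ y) with hs_def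
  rcases eq_or_ne s 0 with hs | hs
  · exact ⟨0, by simpa [hs_def, Prod.ext_iff, eq_comm] using hs⟩
  set u : ℝ → n → ℝ := fun θ => cos θ • x + sin θ • y
  set g : ℝ → ℝ × ℝ := fun θ => (u θ ⬝ᵥ A *ᵥ u θ, u θ ⬝ᵥ B *ᵥ u θ)
  have hg : Continuous g := by
    have hu : Continuous u := by fun_prop
    exact ((continuous_dotProduct_mulVec_self A).comp hu).prodMk
      ((continuous_dotProduct_mulVec_self B).comp hu)
  obtain ⟨θ, t, ht, hθ⟩ := exists_pos_smul_eq_of_map_add_eq_sub hg hs (π / 2) fun θ =>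
    Prod.ext (dotProduct_mulVec_cos_sin_add_pi_div_two A x y θ)
      (dotProduct_mulVec_cos_sin_add_pi_div_two B x y θ)
  simp only [Prod.ext_iff, g] at hθ
  refine ⟨(√t)⁻¹ • u θ, ?_, ?_⟩ <;>
  · rw [smul_dotProduct_mulVec_smul, inv_pow, Real.sq_sqrt ht.le, inv_mul_eq_iff_eq_mul₀ ht.ne']
    simp [hθ, s]

theorem convex_range_dotProduct_mulVec (A B : Matrix n n ℝ) :
    Convex ℝ (range fun x : n → ℝ => (x ⬝ᵥ A *ᵥ x, x ⬝ᵥ B *ᵥ x)) := by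
  rintro _ ⟨x, rfl⟩ _ ⟨y, rfl⟩ a b ha hb -
  obtain ⟨z, hzA, hzB⟩ := exists_dotProduct_mulVec_eq_add A B (√a • x) (√b • y)
  refine ⟨z, ?_⟩
  simp only [hzA, hzB, smul_dotProduct_mulVec_smul, Real.sq_sqrt ha, Real.sq_sqrt hb,
    Prod.smul_mk, Prod.mk_add_mk, smul_eq_mul]

theorem s_lemma {A B : Matrix n n ℝ} (h : ∀ x, 0 < x ⬝ᵥ B *ᵥ x → 0 ≤ x ⬝ᵥ A *ᵥ x)
    {x₀ : n → ℝ} (hx₀ : 0 < x₀ ⬝ᵥ B *ᵥ x₀) :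
    ∃ α : ℝ, 0 ≤ α ∧ ∀ x, α * (x ⬝ᵥ B *ᵥ x) ≤ x ⬝ᵥ A *ᵥ x := by
  set W := range fun x : n → ℝ => (x ⬝ᵥ A *ᵥ x, x ⬝ᵥ B *ᵥ x)
  have hcone : ∀ w ∈ W, ∀ t : ℝ, 0 ≤ t → t • w ∈ W := by
    rintro _ ⟨x, rfl⟩ t ht
    refine ⟨√t • x, ?_⟩
    simp only [smul_dotProduct_mulVec_smul, Real.sq_sqrt ht, Prod.smul_mk, smul_eq_mul]
  have hdisj : Disjoint (Iio 0 ×ˢ Ioi 0) W := by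
    rw [Set.disjoint_right]
    rintro _ ⟨x, rfl⟩ ⟨hA, hB⟩
    exact (h x hB).not_gt hA
  obtain ⟨α, hα, hle⟩ := exists_nonneg_mul_snd_le_fst (convex_range_dotProduct_mulVec A B)
    hcone hdisj (mem_range_self x₀) hx₀
  exact ⟨α, hα, fun x => hle _ (mem_range_self x)⟩

theorem isCompact_setOf_dotProduct_self_eq_one : IsCompact {x : n → ℝ | x ⬝ᵥ x = 1} := by
  refine (isCompact_closedBall (0 : n → ℝ) 1).of_isClosed_subset
    (isClosed_eq (continuous_id.dotProduct continuous_id) continuous_const) fun x hx => ?_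
  rw [mem_closedBall_zero_iff, pi_norm_le_iff_of_nonneg zero_le_one]
  intro i
  have : x i * x i ≤ 1 :=
    hx ▸ Finset.single_le_sum (fun j _ => mul_self_nonneg (x j)) (Finset.mem_univ i)
  rw [Real.norm_eq_abs, abs_le]
  constructor <;> nlinarith

theorem exists_mul_dotProduct_self_le {C : Set (n → ℝ)} (hC : IsClosed C)
    (hCsmul : ∀ x ∈ C, ∀ c : ℝ, c • x ∈ C) (A : Matrix n n ℝ) :
    ∃ μ : ℝ, (∀ x ∈ C, μ * (x ⬝ᵥ x) ≤ x ⬝ᵥ A *ᵥ x) ∧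
      (0 < μ ∨ ∃ x ∈ C, x ≠ 0 ∧ x ⬝ᵥ A *ᵥ x ≤ 0) := by
  have normalize : ∀ x ∈ C, x ≠ 0 → ∃ y ∈ C ∩ {y | y ⬝ᵥ y = 1},
      x ⬝ᵥ A *ᵥ x = (x ⬝ᵥ x) * (y ⬝ᵥ A *ᵥ y) := fun x hx hx0 => by
    have hxx := dotProduct_self_pos hx0
    refine ⟨(√(x ⬝ᵥ x))⁻¹ • x, ⟨hCsmul x hx _, ?_⟩, ?_⟩
    · rw [Set.mem_ofPred_eq, smul_dotProduct, dotProduct_smul, smul_eq_mul, smul_eq_mul,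
        ← mul_assoc, ← mul_inv, Real.mul_self_sqrt hxx.le, inv_mul_cancel₀ hxx.ne']
    · rw [smul_dotProduct_mulVec_smul, inv_pow, Real.sq_sqrt hxx.le,
        mul_inv_cancel_left₀ hxx.ne']
  rcases (C ∩ {y | y ⬝ᵥ y = 1}).eq_empty_or_nonempty with hK | hK
  · refine ⟨1, fun x hx => ?_, Or.inl one_pos⟩
    obtain rfl : x = 0 := by
      by_contra hx0
      obtain ⟨y, hy, -⟩ := normalize x hx hx0
      exact hK.subset hy
    simp
  obtain ⟨y₀, hy₀, hmin⟩ :=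
    (isCompact_setOf_dotProduct_self_eq_one.inter_left hC).exists_isMinOn hK
      (continuous_dotProduct_mulVec_self A).continuousOn
  refine ⟨y₀ ⬝ᵥ A *ᵥ y₀, fun x hx => ?_, ?_⟩
  · rcases eq_or_ne x 0 with rfl | hx0
    · simp
    obtain ⟨y, hy, hxy⟩ := normalize x hx hx0
    rw [hxy, mul_comm]
    exact mul_le_mul_of_nonneg_left (hmin hy) (dotProduct_self_pos hx0).le
  · refine (lt_or_ge 0 _).imp_right fun hle => ⟨y₀, hy₀.1, fun h => ?_, hle⟩
    simpa [h] using hy₀.2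

theorem s_lemma_strict_of_exists_pos [DecidableEq n] {A B : Matrix n n ℝ}
    (h : ∀ x ≠ 0, 0 ≤ x ⬝ᵥ B *ᵥ x → 0 < x ⬝ᵥ A *ᵥ x) {x₀ : n → ℝ}
    (hx₀ : 0 < x₀ ⬝ᵥ B *ᵥ x₀) :
    ∃ α : ℝ, 0 ≤ α ∧ ∀ x ≠ 0, α * (x ⬝ᵥ B *ᵥ x) < x ⬝ᵥ A *ᵥ x := by
  have hcone : ∀ x ∈ {x : n → ℝ | 0 ≤ x ⬝ᵥ B *ᵥ x}, ∀ c : ℝ,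
      c • x ∈ {x : n → ℝ | 0 ≤ x ⬝ᵥ B *ᵥ x} := fun x hx c => by
    rw [Set.mem_ofPred_eq, smul_dotProduct_mulVec_smul]
    exact mul_nonneg (sq_nonneg c) hx
  obtain ⟨μ, hμ, hμpos | ⟨x, hxB, hx0, hxA⟩⟩ := exists_mul_dotProduct_self_le
    (isClosed_le continuous_const (continuous_dotProduct_mulVec_self B)) hcone A
  · have hshift : ∀ x, 0 < x ⬝ᵥ B *ᵥ x → 0 ≤ x ⬝ᵥ (A - μ • 1) *ᵥ x := fun x hx => by
      simpa [sub_mulVec, smul_mulVec] using hμ x hx.le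
    obtain ⟨α, hα, hαle⟩ := s_lemma hshift hx₀
    refine ⟨α, hα, fun x hx => ?_⟩
    have := hαle x
    simp only [sub_mulVec, smul_mulVec, one_mulVec, dotProduct_sub, dotProduct_smul,
      smul_eq_mul] at this
    nlinarith [dotProduct_self_pos hx]
  · exact absurd hxA (h x hx0 hxB).not_ge

theorem s_lemma_strict_of_nonpos {A B : Matrix n n ℝ}
    (h : ∀ x ≠ 0, 0 ≤ x ⬝ᵥ B *ᵥ x → 0 < x ⬝ᵥ A *ᵥ x) (hB : ∀ x, x ⬝ᵥ B *ᵥ x ≤ 0) :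
    ∃ α : ℝ, 0 ≤ α ∧ ∀ x ≠ 0, α * (x ⬝ᵥ B *ᵥ x) < x ⬝ᵥ A *ᵥ x := by
  have hcone : ∀ x ∈ {x : n → ℝ | x ⬝ᵥ A *ᵥ x ≤ 0}, ∀ c : ℝ,
      c • x ∈ {x : n → ℝ | x ⬝ᵥ A *ᵥ x ≤ 0} := fun x hx c => by
    rw [Set.mem_ofPred_eq, smul_dotProduct_mulVec_smul]
    exact mul_nonpos_of_nonneg_of_nonpos (sq_nonneg c) hx
  obtain ⟨δ, hδ, hδpos | ⟨x, hxA, hx0, hxB⟩⟩ := exists_mul_dotProduct_self_le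
    (isClosed_le (continuous_dotProduct_mulVec_self A) continuous_const) hcone (-B)
  · obtain ⟨m, hm, -⟩ := exists_mul_dotProduct_self_le isClosed_univ (fun _ _ _ => trivial) A
    set α := (|m| + 1) / δ
    have hα : 0 ≤ α := by positivity
    have hαδ : α * δ = |m| + 1 := div_mul_cancel₀ _ hδpos.ne'
    refine ⟨α, hα, fun x hx => ?_⟩
    rcases le_or_gt (x ⬝ᵥ A *ᵥ x) 0 with hxA | hxA
    · have hxB := hδ x hxA
      simp only [neg_mulVec, dotProduct_neg] at hxB
      nlinarith [hm x trivial, neg_abs_le m, mul_le_mul_of_nonneg_left hxB hα,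
        dotProduct_self_pos hx]
    · nlinarith [hB x]
  · simp only [neg_mulVec, dotProduct_neg, neg_nonpos] at hxB
    exact absurd hxA (h x hx0 hxB).not_ge

theorem s_lemma_strict [DecidableEq n] {A B : Matrix n n ℝ}
    (h : ∀ x ≠ 0, 0 ≤ x ⬝ᵥ B *ᵥ x → 0 < x ⬝ᵥ A *ᵥ x) :
    ∃ α : ℝ, 0 ≤ α ∧ ∀ x ≠ 0, α * (x ⬝ᵥ B *ᵥ x) < x ⬝ᵥ A *ᵥ x := by
  by_cases hB : ∃ x₀, 0 < x₀ ⬝ᵥ B *ᵥ x₀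
  · obtain ⟨x₀, hx₀⟩ := hB
    exact s_lemma_strict_of_exists_pos h hx₀
  · push Not at hB
    exact s_lemma_strict_of_nonpos h hB

variable {m k : Type*}

theorem dotProduct_transpose_mul_mul_mulVec [Fintype m] [Fintype k] (W : Matrix k m ℝ)
    (M : Matrix k k ℝ) (x : m → ℝ) :
    x ⬝ᵥ (Wᵀ * M * W) *ᵥ x = (W *ᵥ x) ⬝ᵥ M *ᵥ (W *ᵥ x) := by
  rw [← mulVec_mulVec, ← mulVec_mulVec, dotProduct_mulVec, vecMul_transpose]

theorem exists_mulVec_eq_forall_dotProduct_mulVec_add_nonneg [Fintype m] [Fintype k]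
    {S : Matrix m m ℝ} {D : Matrix k k ℝ} (hS : S.IsSymm) (hS0 : ∀ v, 0 ≤ v ⬝ᵥ S *ᵥ v)
    (hD : ∀ w ≠ 0, w ⬝ᵥ D *ᵥ w < 0) {x : m → ℝ} {w : k → ℝ}
    (hxw : 0 ≤ w ⬝ᵥ D *ᵥ w + x ⬝ᵥ S *ᵥ x) :
    ∃ Δ : Matrix k m ℝ, Δ *ᵥ x = w ∧
      ∀ v, 0 ≤ (Δ *ᵥ v) ⬝ᵥ D *ᵥ (Δ *ᵥ v) + v ⬝ᵥ S *ᵥ v := by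
  rcases (hS0 x).eq_or_lt with hx | hx
  · obtain rfl : w = 0 := by
      by_contra hw
      linarith [hD w hw]
    exact ⟨0, by simp, fun v => by simpa using hS0 v⟩
  set s := x ⬝ᵥ S *ᵥ x
  have hΔ : ∀ v, (s⁻¹ • vecMulVec w (x ᵥ* S)) *ᵥ v = (s⁻¹ * (x ⬝ᵥ S *ᵥ v)) • w := fun v => by
    rw [smul_mulVec, vecMulVec_mulVec, ← dotProduct_mulVec, op_smul_eq_smul, smul_smul]
  refine ⟨s⁻¹ • vecMulVec w (x ᵥ* S), by rw [hΔ, inv_mul_cancel₀ hx.ne', one_smul],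
    fun v => ?_⟩
  have hCS : (x ⬝ᵥ S *ᵥ v) ^ 2 ≤ s * (v ⬝ᵥ S *ᵥ v) := by
    classical
    simpa only [toBilin'_apply'] using (toBilin' S).apply_sq_le_of_symm
      (fun v => by simpa only [toBilin'_apply'] using hS0 v)
      (LinearMap.BilinForm.isSymm_iff.1 (isSymm_toBilin'_iff_isSymm.2 hS)) x v
  rw [hΔ, smul_dotProduct_mulVec_smul]
  have h1 : (s⁻¹ * (x ⬝ᵥ S *ᵥ v)) ^ 2 * s = (x ⬝ᵥ S *ᵥ v) ^ 2 / s := by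
    field_simp
  have h2 : (x ⬝ᵥ S *ᵥ v) ^ 2 / s ≤ v ⬝ᵥ S *ᵥ v := by
    rw [div_le_iff₀ hx]; linarith
  nlinarith [mul_le_mul_of_nonneg_left (show -s ≤ w ⬝ᵥ D *ᵥ w by linarith)
    (sq_nonneg (s⁻¹ * (x ⬝ᵥ S *ᵥ v)))]

/-- The set `S_H`. -/
def qmiSolutions [Fintype m] [Fintype k] [DecidableEq m] (H : Matrix (m ⊕ k) (m ⊕ k) ℝ) :
    Set (Matrix k m ℝ) :=
  {Z | ((fromRows (1 : Matrix m m ℝ) Z)ᵀ * H * fromRows (1 : Matrix m m ℝ) Z).PosSemidef}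

theorem mem_qmiSolutions_iff [Fintype m] [Fintype k] [DecidableEq m]
    {H : Matrix (m ⊕ k) (m ⊕ k) ℝ} (hH : H.IsSymm) {Z : Matrix k m ℝ} :
    Z ∈ qmiSolutions H ↔ ∀ v, 0 ≤ Sum.elim v (Z *ᵥ v) ⬝ᵥ H *ᵥ Sum.elim v (Z *ᵥ v) := by
  have hW := isHermitian_conjTranspose_mul_mul (fromRows (1 : Matrix m m ℝ) Z)
    (isHermitian_iff_isSymm.2 hH)
  rw [conjTranspose_eq_transpose_of_trivial] at hW
  simp only [qmiSolutions, Set.mem_ofPred_eq, posSemidef_iff_dotProduct_mulVec, hW, true_and,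
    star_trivial, dotProduct_transpose_mul_mul_mulVec, fromRows_mulVec, one_mulVec]

theorem IsSymm.dotProduct_mulVec_sumElim [Fintype m] [Fintype k] [DecidableEq k]
    {H : Matrix (m ⊕ k) (m ⊕ k) ℝ} (hH : H.IsSymm) (hD : IsUnit H.toBlocks₂₂.det)
    (x : m → ℝ) (y : k → ℝ) :
    Sum.elim x y ⬝ᵥ H *ᵥ Sum.elim x y =
      ((H.toBlocks₂₂⁻¹ * H.toBlocks₂₁) *ᵥ x + y) ⬝ᵥ H.toBlocks₂₂ *ᵥ
          ((H.toBlocks₂₂⁻¹ * H.toBlocks₂₁) *ᵥ x + y) +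
        x ⬝ᵥ (H.toBlocks₁₁ - H.toBlocks₁₂ * H.toBlocks₂₂⁻¹ * H.toBlocks₂₁) *ᵥ x := by
  have := invertibleOfIsUnitDet _ hD
  obtain ⟨-, h₁₂, -, h₂₂⟩ := isSymm_fromBlocks_iff.1 ((fromBlocks_toBlocks H).symm ▸ hH)
  have := schur_complement_eq₂₂ H.toBlocks₁₁ H.toBlocks₁₂ x y (isHermitian_iff_isSymm.2 h₂₂)
  rw [conjTranspose_eq_transpose_of_trivial, h₁₂, fromBlocks_toBlocks] at this
  simpa only [star_trivial, dotProduct_mulVec] using this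

theorem IsSymm.schur_complement₂₂ [Fintype k] [DecidableEq k] {H : Matrix (m ⊕ k) (m ⊕ k) ℝ}
    (hH : H.IsSymm) :
    (H.toBlocks₁₁ - H.toBlocks₁₂ * H.toBlocks₂₂⁻¹ * H.toBlocks₂₁).IsSymm := by
  obtain ⟨h₁₁, h₁₂, h₂₁, h₂₂⟩ := isSymm_fromBlocks_iff.1 ((fromBlocks_toBlocks H).symm ▸ hH)
  rw [IsSymm, transpose_sub, transpose_mul, transpose_mul, transpose_nonsing_inv, h₁₁.eq,
    h₂₂.eq, h₁₂, h₂₁, Matrix.mul_assoc]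

theorem exists_mem_qmiSolutions_mulVec_eq [Fintype m] [Fintype k] [DecidableEq m]
    [DecidableEq k] {H : Matrix (m ⊕ k) (m ⊕ k) ℝ} (hH : H.IsSymm)
    (hD : (-H.toBlocks₂₂).PosDef) (hne : (qmiSolutions H).Nonempty) {x : m → ℝ} {y : k → ℝ}
    (hxy : 0 ≤ Sum.elim x y ⬝ᵥ H *ᵥ Sum.elim x y) :
    ∃ Z ∈ qmiSolutions H, Z *ᵥ x = y := by
  set D := H.toBlocks₂₂
  set K := D⁻¹ * H.toBlocks₂₁
  set S := H.toBlocks₁₁ - H.toBlocks₁₂ * D⁻¹ * H.toBlocks₂₁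
  have hDu : IsUnit D.det := (isUnit_iff_isUnit_det D).1 (neg_neg D ▸ hD.isUnit.neg)
  have hDneg : ∀ w ≠ 0, w ⬝ᵥ D *ᵥ w < 0 := fun w hw => by
    simpa [neg_mulVec] using hD.dotProduct_mulVec_pos hw
  have hDnonpos : ∀ w, w ⬝ᵥ D *ᵥ w ≤ 0 := fun w => by
    simpa [neg_mulVec] using hD.posSemidef.dotProduct_mulVec_nonneg w
  have hmem : ∀ Z, Z ∈ qmiSolutions H ↔
      ∀ v, 0 ≤ ((K + Z) *ᵥ v) ⬝ᵥ D *ᵥ ((K + Z) *ᵥ v) + v ⬝ᵥ S *ᵥ v := fun Z => by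
    simp only [mem_qmiSolutions_iff hH, hH.dotProduct_mulVec_sumElim hDu, add_mulVec]
    rfl
  obtain ⟨Z₀, hZ₀⟩ := hne
  have hS : ∀ v, 0 ≤ v ⬝ᵥ S *ᵥ v := fun v => by
    linarith [(hmem Z₀).1 hZ₀ v, hDnonpos ((K + Z₀) *ᵥ v)]
  rw [hH.dotProduct_mulVec_sumElim hDu] at hxy
  obtain ⟨Δ, hΔx, hΔ⟩ :=
    exists_mulVec_eq_forall_dotProduct_mulVec_add_nonneg hH.schur_complement₂₂ hS hDneg hxy
  exact ⟨Δ - K, (hmem _).2 (by simpa using hΔ), by rw [sub_mulVec, hΔx, add_sub_cancel_left]⟩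

end Matrix

theorem matrix_S_lemma_general (p r : ℕ)
    (M H : Matrix (Fin p ⊕ Fin r) (Fin p ⊕ Fin r) ℝ)
    (hM : M.IsSymm) (hH : H.IsSymm)
    (hH22 : (-(H.toBlocks₂₂)).PosDef)
    (SH : Set (Matrix (Fin r) (Fin p) ℝ))
    (hSH : SH = {Z : Matrix (Fin r) (Fin p) ℝ |
      ((fromRows (1 : Matrix (Fin p) (Fin p) ℝ) Z)ᵀ * H *
        fromRows (1 : Matrix (Fin p) (Fin p) ℝ) Z).PosSemidef})
    (hne : SH.Nonempty) :
    (∀ Z ∈ SH, ((fromRows (1 : Matrix (Fin p) (Fin p) ℝ) Z)ᵀ * M *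
        fromRows (1 : Matrix (Fin p) (Fin p) ℝ) Z).PosDef)
      ↔ ∃ α : ℝ, 0 ≤ α ∧ (M - α • H).PosDef := by
  change SH = qmiSolutions H at hSH
  subst hSH
  constructor
  · intro hMZ
    obtain ⟨α, hα, hlt⟩ := s_lemma_strict (A := M) (B := H) fun ξ hξ hHξ => by
      rw [← Sum.elim_comp_inl_inr ξ] at hξ hHξ ⊢
      obtain ⟨Z, hZ, hZx⟩ := exists_mem_qmiSolutions_mulVec_eq hH hH22 hne hHξ
      have hx : ξ ∘ Sum.inl ≠ 0 := fun hx =>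
        hξ (by rw [← hZx, hx, mulVec_zero, Sum.elim_zero_zero])
      simpa [dotProduct_transpose_mul_mul_mulVec, hZx] using (hMZ Z hZ).dotProduct_mulVec_pos hx
    refine ⟨α, hα, .of_dotProduct_mulVec_pos ?_ fun x hx => ?_⟩
    · exact isHermitian_iff_isSymm.2 (hM.sub (hH.smul α))
    · simpa [sub_mulVec, smul_mulVec] using hlt x hx
  · rintro ⟨α, hα, hpos⟩ Z hZ
    have hinj : Function.Injective (fromRows (1 : Matrix (Fin p) (Fin p) ℝ) Z).mulVec :=
      fun x y hxy => by simpa using congrArg (· ∘ Sum.inl) hxy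
    have := (hpos.conjTranspose_mul_mul_same hinj).add_posSemidef (hZ.smul hα)
    simpa [conjTranspose_eq_transpose_of_trivial, Matrix.mul_sub, Matrix.sub_mul] using this

/-- **Matrix S-lemma.** Let `M, H ∈ ℝ^{(p+r)×(p+r)}` be symmetric, with `H` partitioned so that
its lower-right `r × r` block `H₂₂` is negative definite.  Let
`S_H := {Z ∈ ℝ^{r×p} : col(I, Z)ᵀ H col(I, Z) ⪰ 0}` and assume `S_H ≠ ∅`.  Then
`col(I, Z)ᵀ M col(I, Z) ≻ 0` for all `Z ∈ S_H` iff there exists `α ≥ 0` with `M − αH ≻ 0`. -/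
theorem matrix_S_lemma (p r : ℕ) (hp : 0 < p) (hr : 0 < r)
    (M H : Matrix (Fin p ⊕ Fin r) (Fin p ⊕ Fin r) ℝ)
    (hM : M.IsSymm) (hH : H.IsSymm)
    (hH22 : (-(H.toBlocks₂₂)).PosDef)
    (SH : Set (Matrix (Fin r) (Fin p) ℝ))
    (hSH : SH = {Z : Matrix (Fin r) (Fin p) ℝ |
      ((fromRows (1 : Matrix (Fin p) (Fin p) ℝ) Z)ᵀ * H *
        fromRows (1 : Matrix (Fin p) (Fin p) ℝ) Z).PosSemidef})
    (hne : SH.Nonempty) :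
    (∀ Z ∈ SH, ((fromRows (1 : Matrix (Fin p) (Fin p) ℝ) Z)ᵀ * M *
        fromRows (1 : Matrix (Fin p) (Fin p) ℝ) Z).PosDef)
      ↔ ∃ α : ℝ, 0 ≤ α ∧ (M - α • H).PosDef :=
  matrix_S_lemma_general p r M H hM hH hH22 SH hSH hne
end

section
/- Let p, r be positive integers and let H ∈ ℝ^{(p+r)×(p+r)} be a symmetric matrix partitioned as H = [[H₁₁, H₁₂],[H₁₂ᵀ, H₂₂]] with H₁₁ ∈ ℝ^{p×p}, H₁₂ ∈ ℝ^{p×r}, H₂₂ ∈ ℝ^{r×r}, and assume H₂₂ ≺ 0. Then the set S_H := {Z ∈ ℝ^{r×p} : col(I_p, Z)ᵀ H col(I_p, Z) ⪰ 0} is nonempty if and only if H₁₁ − H₁₂H₂₂⁻¹H₁₂ᵀ ⪰ 0 (the Schur complement of H with respect to H₂₂ is positive semidefinite). -/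
open Matrix

/-!
Completing the square: with `W = Z + H₂₂⁻¹ H₁₂ᵀ`, the quadratic form
`col(I, Z)ᵀ H col(I, Z)` equals `S + Wᵀ H₂₂ W`, where `S` is the Schur complement.
Since `H₂₂ ≺ 0`, the second term is negative semidefinite, so `S` dominates the form for every `Z`,
and `Z = -H₂₂⁻¹ H₁₂ᵀ` makes the second term vanish.
-/

namespace Matrix

theorem PosDef.isSymm_of_neg {n : Type*} {D : Matrix n n ℝ} (hD : (-D).PosDef) : D.IsSymm := by
  simpa only [neg_neg, isHermitian_iff_isSymm] using hD.isHermitian.neg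

theorem PosDef.isUnit_det_of_neg {n : Type*} [Fintype n] [DecidableEq n] {D : Matrix n n ℝ}
    (hD : (-D).PosDef) : IsUnit D.det :=
  (isUnit_iff_isUnit_det D).mp (neg_neg D ▸ hD.isUnit.neg)

variable {m n R : Type*} [Fintype m] [Fintype n] [DecidableEq m] [DecidableEq n] [CommRing R]

theorem fromRows_one_transpose_mul_fromBlocks_mul_fromRows_one (A : Matrix m m R)
    (B : Matrix m n R) {D : Matrix n n R} (hD : IsUnit D.det) (hDs : D.IsSymm)
    (Z : Matrix n m R) :
    (fromRows (1 : Matrix m m R) Z)ᵀ * fromBlocks A B Bᵀ D * fromRows (1 : Matrix m m R) Z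
      = A - B * D⁻¹ * Bᵀ + (Z + D⁻¹ * Bᵀ)ᵀ * D * (Z + D⁻¹ * Bᵀ) := by
  rw [transpose_fromRows, fromCols_mul_fromBlocks, fromCols_mul_fromRows, transpose_add,
    transpose_mul, transpose_nonsing_inv, hDs.eq, transpose_transpose]
  simp only [transpose_one, Matrix.one_mul, Matrix.mul_one, Matrix.add_mul, Matrix.mul_add,
    Matrix.mul_assoc, mul_nonsing_inv_cancel_left _ _ hD, nonsing_inv_mul_cancel_left _ _ hD]
  abel

theorem fromRows_one_transpose_mul_fromBlocks_mul_fromRows_neg_inv (A : Matrix m m R)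
    (B : Matrix m n R) {D : Matrix n n R} (hD : IsUnit D.det) (hDs : D.IsSymm) :
    (fromRows (1 : Matrix m m R) (-(D⁻¹ * Bᵀ)))ᵀ * fromBlocks A B Bᵀ D *
        fromRows (1 : Matrix m m R) (-(D⁻¹ * Bᵀ))
      = A - B * D⁻¹ * Bᵀ := by
  rw [fromRows_one_transpose_mul_fromBlocks_mul_fromRows_one A B hD hDs, neg_add_cancel,
    Matrix.mul_zero, add_zero]

theorem posSemidef_schur_of_posSemidef_fromRows_one (A : Matrix m m ℝ) (B : Matrix m n ℝ)
    {D : Matrix n n ℝ} (hD : (-D).PosDef) {Z : Matrix n m ℝ}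
    (hZ : ((fromRows (1 : Matrix m m ℝ) Z)ᵀ * fromBlocks A B Bᵀ D *
      fromRows (1 : Matrix m m ℝ) Z).PosSemidef) :
    (A - B * D⁻¹ * Bᵀ).PosSemidef := by
  rw [fromRows_one_transpose_mul_fromBlocks_mul_fromRows_one A B hD.isUnit_det_of_neg
    hD.isSymm_of_neg] at hZ
  have hW := hD.posSemidef.conjTranspose_mul_mul_same (Z + D⁻¹ * Bᵀ)
  rw [conjTranspose_eq_transpose_of_trivial] at hW
  simpa only [Matrix.mul_neg, Matrix.neg_mul, add_neg_cancel_right] using hZ.add hW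

end Matrix

theorem SH_nonempty_iff_schur_psd_general (p r : ℕ)
    (H11 : Matrix (Fin p) (Fin p) ℝ) (H12 : Matrix (Fin p) (Fin r) ℝ)
    (H22 : Matrix (Fin r) (Fin r) ℝ)
    (hH22 : (-H22).PosDef) :
    {Z : Matrix (Fin r) (Fin p) ℝ |
        ((fromRows (1 : Matrix (Fin p) (Fin p) ℝ) Z)ᵀ *
          (fromBlocks H11 H12 H12ᵀ H22) *
          fromRows (1 : Matrix (Fin p) (Fin p) ℝ) Z).PosSemidef}.Nonempty
      ↔ (H11 - H12 * H22⁻¹ * H12ᵀ).PosSemidef := by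
  refine ⟨fun ⟨_, hZ⟩ => posSemidef_schur_of_posSemidef_fromRows_one H11 H12 hH22 hZ,
    fun hS => ⟨-(H22⁻¹ * H12ᵀ), ?_⟩⟩
  rwa [Set.mem_ofPred_eq, fromRows_one_transpose_mul_fromBlocks_mul_fromRows_neg_inv H11 H12
    hH22.isUnit_det_of_neg hH22.isSymm_of_neg]

/-- Let `H = [[H₁₁, H₁₂],[H₁₂ᵀ, H₂₂]]` be symmetric with `H₂₂ ≺ 0`.  Then the set
`S_H := {Z ∈ ℝ^{r×p} : col(I, Z)ᵀ H col(I, Z) ⪰ 0}` is nonempty iff the Schur complement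
`H₁₁ − H₁₂ H₂₂⁻¹ H₁₂ᵀ` is positive semidefinite. -/
theorem SH_nonempty_iff_schur_psd (p r : ℕ) (hp : 0 < p) (hr : 0 < r)
    (H11 : Matrix (Fin p) (Fin p) ℝ) (H12 : Matrix (Fin p) (Fin r) ℝ)
    (H22 : Matrix (Fin r) (Fin r) ℝ)
    (hH11 : H11.IsSymm) (hH22sym : H22.IsSymm)
    (hH22 : (-H22).PosDef) :
    {Z : Matrix (Fin r) (Fin p) ℝ |
        ((fromRows (1 : Matrix (Fin p) (Fin p) ℝ) Z)ᵀ *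
          (fromBlocks H11 H12 H12ᵀ H22) *
          fromRows (1 : Matrix (Fin p) (Fin p) ℝ) Z).PosSemidef}.Nonempty
      ↔ (H11 - H12 * H22⁻¹ * H12ᵀ).PosSemidef :=
  SH_nonempty_iff_schur_psd_general p r H11 H12 H22 hH22
end

section
/- (Dualization lemma.) Let Δ ∈ ℝ^{n×n} be a nonsingular symmetric matrix, and let 𝒰, 𝒱 ⊆ ℝⁿ be two complementary subspaces (𝒰 ∩ 𝒱 = {0} and 𝒰 + 𝒱 = ℝⁿ). Then the pair of conditions (xᵀΔx < 0 for all x ∈ 𝒰 \ {0}, and xᵀΔx ≥ 0 for all x ∈ 𝒱) holds if and only if the pair of conditions (xᵀΔ⁻¹x > 0 for all x ∈ 𝒰^⊥ \ {0}, and xᵀΔ⁻¹x ≤ 0 for all x ∈ 𝒱^⊥) holds, where 𝒰^⊥ and 𝒱^⊥ denote the orthogonal complements of 𝒰 and 𝒱 in ℝⁿ with respect to the standard inner product. -/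
open Matrix RealInnerProductSpace Module

section Aux

variable {E : Type*} [NormedAddCommGroup E] [InnerProductSpace ℝ E] [FiniteDimensional ℝ E]

private lemma quad_aux {a b : ℝ} (hb : 0 ≤ b) (h : ∀ t : ℝ, 0 ≤ 2 * a * t + b * t ^ 2) :
    a = 0 := by
  by_contra ha
  set c : ℝ := 1 / (b + 1) with hc
  have hb1 : (0:ℝ) < b + 1 := by linarith
  have hcpos : 0 < c := by positivity
  have hbc : b * c < 2 := by
    have : b * c < 1 := by
      rw [hc, mul_one_div, div_lt_one hb1]; linarith
    linarith
  have h1 := h (-(a * c))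
  have ha2 : 0 < a ^ 2 := by positivity
  nlinarith [mul_pos (mul_pos ha2 hcpos) (show (0:ℝ) < 2 - b * c by linarith)]

private lemma key_lemma (T : E →ₗ[ℝ] E) (hT : ∀ x y : E, ⟪T x, y⟫ = ⟪x, T y⟫)
    (hker : ∀ x : E, T x = 0 → x = 0)
    (U V : Submodule ℝ E) (hUV : IsCompl U V)
    (hU : ∀ x ∈ U, x ≠ 0 → ⟪x, T x⟫ < 0) (hV : ∀ x ∈ V, 0 ≤ ⟪x, T x⟫) :
    (∀ z : E, (∀ u ∈ U, ⟪u, T z⟫ = 0) → z ≠ 0 → 0 < ⟪z, T z⟫) ∧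
    (∀ z : E, (∀ v ∈ V, ⟪v, T z⟫ = 0) → ⟪z, T z⟫ ≤ 0) := by
  -- general expansion of the quadratic form
  have expand : ∀ (x y : E) (t : ℝ),
      ⟪x + t • y, T (x + t • y)⟫ = ⟪x, T x⟫ + 2 * t * ⟪x, T y⟫ + t ^ 2 * ⟪y, T y⟫ := by
    intro x y t
    have hyx : ⟪y, T x⟫ = ⟪x, T y⟫ := by
      rw [← hT y x, real_inner_comm]
    rw [map_add, T.map_smul, inner_add_left, inner_add_right, inner_add_right,
      real_inner_smul_left, real_inner_smul_left, real_inner_smul_right,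
      real_inner_smul_right, hyx]
    ring
  have hrank : finrank ℝ U + finrank ℝ V = finrank ℝ E :=
    Submodule.finrank_add_eq_of_isCompl hUV
  -- auxiliary: a subspace W with finrank W + finrank W' > finrank E intersects W' nontrivially
  have hmeet : ∀ W W' : Submodule ℝ E,
      finrank ℝ E < finrank ℝ W + finrank ℝ W' → ∃ w ∈ W ⊓ W', w ≠ 0 := by
    intro W W' hlt
    have hne : W ⊓ W' ≠ ⊥ := by
      intro hbot
      have h1 := Submodule.finrank_sup_add_finrank_inf_eq W W'
      rw [hbot, finrank_bot] at h1
      have h2 := Submodule.finrank_le (W ⊔ W')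
      omega
    obtain ⟨w, hw, hw0⟩ := Submodule.exists_mem_ne_zero_of_ne_bot hne
    exact ⟨w, hw, hw0⟩
  constructor
  · intro z hz hz0
    by_contra hcon
    push_neg at hcon
    by_cases hzU : z ∈ U
    · have h1 := hU z hzU hz0
      have h2 := hz z hzU
      rw [← hT z z, real_inner_comm] at h1
      linarith [hU z hzU hz0, hz z hzU]
    · -- z ∉ U
      have hzne : z ≠ 0 := hz0
      have hdisj : Disjoint U (ℝ ∙ z) := (Submodule.disjoint_span_singleton' hzne).mpr hzU
      have hW : finrank ℝ ↥(U ⊔ (ℝ ∙ z)) = finrank ℝ U + 1 := by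
        have h1 := Submodule.finrank_sup_add_finrank_inf_eq U (ℝ ∙ z)
        rw [hdisj.eq_bot, finrank_bot, finrank_span_singleton hzne] at h1
        omega
      obtain ⟨w, hw, hw0⟩ := hmeet (U ⊔ (ℝ ∙ z)) V (by omega)
      obtain ⟨hwW, hwV⟩ := Submodule.mem_inf.mp hw
      obtain ⟨u, huU, y, hy, rfl⟩ := Submodule.mem_sup.mp hwW
      obtain ⟨t, rfl⟩ := Submodule.mem_span_singleton.mp hy
      have hexp := expand u z t
      rw [hz u huU] at hexp
      have hwnn : 0 ≤ ⟪u + t • z, T (u + t • z)⟫ := hV _ hwV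
      have huu : ⟪u, T u⟫ ≤ 0 := by
        by_cases hu0 : u = 0
        · simp [hu0]
        · exact le_of_lt (hU u huU hu0)
      have htz : t ^ 2 * ⟪z, T z⟫ ≤ 0 :=
        mul_nonpos_of_nonneg_of_nonpos (sq_nonneg t) hcon
      have hu0 : u = 0 := by
        by_contra hu0
        have := hU u huU hu0
        nlinarith
      subst hu0
      simp only [zero_add] at hwV hw0
      have ht0 : t ≠ 0 := by
        intro h; apply hw0; rw [h, zero_smul]
      have hzV : z ∈ V := by
        have : z = t⁻¹ • (t • z) := by rw [smul_smul, inv_mul_cancel₀ ht0, one_smul]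
        rw [this]
        exact V.smul_mem _ (by simpa using hwV)
      have hzz : ⟪z, T z⟫ = 0 := le_antisymm hcon (hV z hzV)
      -- show T z ⊥ V
      have horthV : ∀ v ∈ V, ⟪v, T z⟫ = 0 := by
        intro v hvV
        have hzv : ⟪z, T v⟫ = ⟪v, T z⟫ := by rw [← hT z v, real_inner_comm]
        apply quad_aux (hV v hvV)
        intro s
        have hq := hV (z + s • v) (V.add_mem hzV (V.smul_mem s hvV))
        rw [expand z v s, hzz, hzv] at hq
        linarith
      have hallz : ∀ x : E, ⟪x, T z⟫ = 0 := by
        intro x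
        have hmem : x ∈ U ⊔ V := by rw [hUV.sup_eq_top]; trivial
        obtain ⟨u, hu, v, hv, heq⟩ := Submodule.mem_sup.mp hmem
        rw [← heq, inner_add_left, hz u hu, horthV v hv, add_zero]
      have hTz : T z = 0 := by
        rw [← inner_self_eq_zero (𝕜 := ℝ)]
        exact hallz (T z)
      exact hz0 (hker z hTz)
  · intro z hz
    by_contra hcon
    push_neg at hcon
    have hz0 : z ≠ 0 := by
      intro h; rw [h, map_zero, inner_zero_right] at hcon; exact lt_irrefl 0 hcon
    have hzV : z ∉ V := by
      intro hzV
      have := hz z hzV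
      linarith
    have hdisj : Disjoint V (ℝ ∙ z) := (Submodule.disjoint_span_singleton' hz0).mpr hzV
    have hW : finrank ℝ ↥(V ⊔ (ℝ ∙ z)) = finrank ℝ V + 1 := by
      have h1 := Submodule.finrank_sup_add_finrank_inf_eq V (ℝ ∙ z)
      rw [hdisj.eq_bot, finrank_bot, finrank_span_singleton hz0] at h1
      omega
    obtain ⟨w, hw, hw0⟩ := hmeet (V ⊔ (ℝ ∙ z)) U (by omega)
    obtain ⟨hwW, hwU⟩ := Submodule.mem_inf.mp hw
    obtain ⟨v, hvV, y, hy, rfl⟩ := Submodule.mem_sup.mp hwW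
    obtain ⟨t, rfl⟩ := Submodule.mem_span_singleton.mp hy
    have hexp := expand v z t
    rw [hz v hvV] at hexp
    have hneg := hU _ hwU hw0
    have hvv := hV v hvV
    nlinarith [sq_nonneg t]

end Aux

private lemma dualization_fwd (n : ℕ) (Δ : Matrix (Fin n) (Fin n) ℝ)
    (hΔsym : Δ.IsSymm) (hΔ : IsUnit Δ.det)
    (U V : Submodule ℝ (EuclideanSpace ℝ (Fin n))) (hUV : IsCompl U V)
    (h1 : ∀ x ∈ U, x ≠ 0 → ⟪x, Matrix.toEuclideanLin Δ x⟫ < 0)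
    (h2 : ∀ x ∈ V, 0 ≤ ⟪x, Matrix.toEuclideanLin Δ x⟫) :
    (∀ x ∈ Uᗮ, x ≠ 0 → 0 < ⟪x, Matrix.toEuclideanLin Δ⁻¹ x⟫) ∧
    (∀ x ∈ Vᗮ, ⟪x, Matrix.toEuclideanLin Δ⁻¹ x⟫ ≤ 0) := by
  set T := Matrix.toEuclideanLin Δ with hTdef
  set S := Matrix.toEuclideanLin Δ⁻¹ with hSdef
  have hTsymm : ∀ x y, ⟪T x, y⟫ = ⟪x, T y⟫ := by
    have hherm : Δ.IsHermitian := by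
      rw [Matrix.IsHermitian, Matrix.conjTranspose_eq_transpose_of_trivial]
      exact hΔsym
    exact Matrix.isHermitian_iff_isSymmetric.mp hherm
  have hTS : ∀ x, T (S x) = x := by
    intro x
    rw [hTdef, hSdef, Matrix.toEuclideanLin_eq_toLin, ← Matrix.toLin_mul_apply,
      Matrix.mul_nonsing_inv Δ hΔ, Matrix.toLin_one, LinearMap.id_apply]
  have hST : ∀ x, S (T x) = x := by
    intro x
    rw [hTdef, hSdef, Matrix.toEuclideanLin_eq_toLin, ← Matrix.toLin_mul_apply,
      Matrix.nonsing_inv_mul Δ hΔ, Matrix.toLin_one, LinearMap.id_apply]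
  have hker : ∀ x, T x = 0 → x = 0 := by
    intro x hx
    have := hST x
    rw [hx, map_zero] at this
    exact this.symm
  obtain ⟨P1, P2⟩ := key_lemma T hTsymm hker U V hUV h1 h2
  constructor
  · intro x hx hx0
    have hSx0 : S x ≠ 0 := by
      intro h; apply hx0; rw [← hTS x, h, map_zero]
    have hz := P1 (S x) (fun u hu => by rw [hTS x]; exact (U.mem_orthogonal x).mp hx u hu) hSx0
    rw [hTS x] at hz
    rwa [real_inner_comm] at hz
  · intro x hx
    have hz := P2 (S x) (fun v hv => by rw [hTS x]; exact (V.mem_orthogonal x).mp hx v hv)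
    rw [hTS x] at hz
    rwa [real_inner_comm] at hz

/-- **Dualization lemma.** Let `Δ ∈ ℝ^{n×n}` be a nonsingular symmetric matrix and let
`𝒰, 𝒱` be complementary subspaces of `ℝⁿ`.  Then `xᵀΔx < 0` on `𝒰 \ {0}` and `xᵀΔx ≥ 0`
on `𝒱` iff `xᵀΔ⁻¹x > 0` on `𝒰^⊥ \ {0}` and `xᵀΔ⁻¹x ≤ 0` on `𝒱^⊥`. -/
theorem dualization_lemma (n : ℕ) (Δ : Matrix (Fin n) (Fin n) ℝ)
    (hΔsym : Δ.IsSymm) (hΔ : IsUnit Δ.det)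
    (U V : Submodule ℝ (EuclideanSpace ℝ (Fin n))) (hUV : IsCompl U V) :
    ((∀ x ∈ U, x ≠ 0 → ⟪x, Matrix.toEuclideanLin Δ x⟫ < 0) ∧
        (∀ x ∈ V, 0 ≤ ⟪x, Matrix.toEuclideanLin Δ x⟫))
      ↔ ((∀ x ∈ Uᗮ, x ≠ 0 → 0 < ⟪x, Matrix.toEuclideanLin Δ⁻¹ x⟫) ∧
        (∀ x ∈ Vᗮ, ⟪x, Matrix.toEuclideanLin Δ⁻¹ x⟫ ≤ 0)) := by
  constructor
  · rintro ⟨h1, h2⟩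
    exact dualization_fwd n Δ hΔsym hΔ U V hUV h1 h2
  · rintro ⟨h1, h2⟩
    have hdet0 : Δ.det ≠ 0 := by
      intro h; rw [h] at hΔ; simp at hΔ
    have hsym' : (-Δ⁻¹).IsSymm := by
      show (-Δ⁻¹)ᵀ = -Δ⁻¹
      rw [Matrix.transpose_neg, Matrix.transpose_nonsing_inv]
      rw [show Δᵀ = Δ from hΔsym]
    have hdet' : IsUnit (-Δ⁻¹).det := by
      rw [isUnit_iff_ne_zero, Matrix.det_neg, Matrix.det_nonsing_inv]
      simp [Ring.inverse_eq_inv', hdet0, pow_ne_zero_iff]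
    have hcompl' : IsCompl Uᗮ Vᗮ := by
      have hdisj : Uᗮ ⊓ Vᗮ = ⊥ := by
        rw [Submodule.inf_orthogonal, hUV.sup_eq_top, Submodule.top_orthogonal_eq_bot]
      have hbotorth : (Uᗮ ⊔ Vᗮ)ᗮ = ⊥ := by
        rw [← Submodule.inf_orthogonal Uᗮ Vᗮ, Submodule.orthogonal_orthogonal,
          Submodule.orthogonal_orthogonal]
        exact hUV.inf_eq_bot
      have hsup : Uᗮ ⊔ Vᗮ = ⊤ := by
        calc Uᗮ ⊔ Vᗮ = (Uᗮ ⊔ Vᗮ)ᗮᗮ := (Submodule.orthogonal_orthogonal _).symm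
          _ = (⊥ : Submodule ℝ (EuclideanSpace ℝ (Fin n)))ᗮ := by rw [hbotorth]
          _ = ⊤ := Submodule.bot_orthogonal_eq_top
      exact ⟨disjoint_iff.mpr hdisj, codisjoint_iff.mpr hsup⟩
    have hinvinv : (-Δ⁻¹)⁻¹ = -Δ :=
      Matrix.inv_eq_right_inv (by rw [neg_mul_neg, Matrix.nonsing_inv_mul Δ hΔ])
    have h1' : ∀ x ∈ Uᗮ, x ≠ 0 → ⟪x, Matrix.toEuclideanLin (-Δ⁻¹) x⟫ < 0 := by
      intro x hx hx0
      rw [map_neg, LinearMap.neg_apply, inner_neg_right]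
      linarith [h1 x hx hx0]
    have h2' : ∀ x ∈ Vᗮ, 0 ≤ ⟪x, Matrix.toEuclideanLin (-Δ⁻¹) x⟫ := by
      intro x hx
      rw [map_neg, LinearMap.neg_apply, inner_neg_right]
      linarith [h2 x hx]
    obtain ⟨g1, g2⟩ := dualization_fwd n (-Δ⁻¹) hsym' hdet' Uᗮ Vᗮ hcompl' h1' h2'
    rw [hinvinv] at g1 g2
    rw [Submodule.orthogonal_orthogonal] at g1
    rw [Submodule.orthogonal_orthogonal] at g2
    constructor
    · intro x hx hx0
      have := g1 x hx hx0
      rw [map_neg, LinearMap.neg_apply, inner_neg_right] at this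
      linarith
    · intro x hx
      have := g2 x hx
      rw [map_neg, LinearMap.neg_apply, inner_neg_right] at this
      linarith
end

section
/- Let A ∈ ℝ^{n×n}, B ∈ ℝ^{n×m}, C ∈ ℝ^{p×n}, D ∈ ℝ^{p×m}, let P ∈ ℝ^{n×n} be symmetric with P ≻ 0, let Q ∈ ℝ^{m×m}, S ∈ ℝ^{m×p}, and let R ∈ ℝ^{p×p} be symmetric with R ⪰ 0. If col(I_n 0; A B; 0 I_m; C D)ᵀ · blockdiag(−P, P, [[Q, S],[Sᵀ, R]]) · col(I_n 0; A B; 0 I_m; C D) ≺ 0, then AᵀПA − P ≺ 0 with П = P (the Lyapunov inequality AᵀPA − P ≺ 0 holds), and consequently every (complex) eigenvalue λ of A satisfies |λ| < 1. -/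
/-!
Evaluating the LMI at the input-free vector `(x, 0)` gives
`(Ax)ᵀP(Ax) - xᵀPx + (Cx)ᵀR(Cx) < 0`, and `R ⪰ 0` lets us drop the output term: this is the
Lyapunov inequality. For a complex eigenpair `A v = λ v` one has
`v*(P - AᵀPA)v = (1 - |λ|²) v*Pv`, and both quadratic forms are positive because a real positive
definite matrix stays positive definite over `ℂ`, so `|λ| < 1`.
-/

open Matrix

/-- The stacked matrix `col(I 0; A B; 0 I; C D)`. -/
noncomputable def stackIO {n m p : ℕ}
    (A : Matrix (Fin n) (Fin n) ℝ) (B : Matrix (Fin n) (Fin m) ℝ)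
    (C : Matrix (Fin p) (Fin n) ℝ) (D : Matrix (Fin p) (Fin m) ℝ) :
    Matrix ((Fin n ⊕ Fin n) ⊕ (Fin m ⊕ Fin p)) (Fin n ⊕ Fin m) ℝ :=
  fromRows
    (fromRows (fromCols (1 : Matrix (Fin n) (Fin n) ℝ) (0 : Matrix (Fin n) (Fin m) ℝ))
      (fromCols A B))
    (fromRows (fromCols (0 : Matrix (Fin m) (Fin n) ℝ) (1 : Matrix (Fin m) (Fin m) ℝ))
      (fromCols C D))

/-- The block-diagonal matrix `blockdiag(−P, P, [[Q, S],[Sᵀ, R]])`. -/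
noncomputable def dissipWeight {n m p : ℕ}
    (P : Matrix (Fin n) (Fin n) ℝ) (Q : Matrix (Fin m) (Fin m) ℝ)
    (S : Matrix (Fin m) (Fin p) ℝ) (R : Matrix (Fin p) (Fin p) ℝ) :
    Matrix ((Fin n ⊕ Fin n) ⊕ (Fin m ⊕ Fin p)) ((Fin n ⊕ Fin n) ⊕ (Fin m ⊕ Fin p)) ℝ :=
  fromBlocks (fromBlocks (-P) 0 0 P) 0 0 (fromBlocks Q S Sᵀ R)

open scoped ComplexOrder

theorem Matrix.dotProduct_conjTranspose_mul_mul_mulVec {α m n : Type*} [Fintype m] [Fintype n]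
    [CommSemiring α] [StarRing α] (A : Matrix m n α) (P : Matrix m m α) (v : n → α) :
    star v ⬝ᵥ ((Aᴴ * P * A) *ᵥ v) = star (A *ᵥ v) ⬝ᵥ (P *ᵥ (A *ᵥ v)) := by
  rw [← mulVec_mulVec, ← mulVec_mulVec, dotProduct_mulVec, ← star_mulVec]

theorem Matrix.dotProduct_transpose_mul_mul_mulVec_s4 {α m n : Type*} [Fintype m] [Fintype n]
    [CommSemiring α] (A : Matrix m n α) (P : Matrix m m α) (v : n → α) :
    v ⬝ᵥ ((Aᵀ * P * A) *ᵥ v) = (A *ᵥ v) ⬝ᵥ (P *ᵥ (A *ᵥ v)) := by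
  rw [← mulVec_mulVec, ← mulVec_mulVec, dotProduct_mulVec, vecMul_transpose]

theorem stackIO_mulVec_sumElim_zero {n m p : ℕ} (A : Matrix (Fin n) (Fin n) ℝ)
    (B : Matrix (Fin n) (Fin m) ℝ) (C : Matrix (Fin p) (Fin n) ℝ) (D : Matrix (Fin p) (Fin m) ℝ)
    (x : Fin n → ℝ) :
    stackIO A B C D *ᵥ Sum.elim x 0 = Sum.elim (Sum.elim x (A *ᵥ x)) (Sum.elim 0 (C *ᵥ x)) := by
  simp [stackIO, fromBlocks_mulVec]

theorem dotProduct_dissipWeight_mulVec {n m p : ℕ} (P : Matrix (Fin n) (Fin n) ℝ)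
    (Q : Matrix (Fin m) (Fin m) ℝ) (S : Matrix (Fin m) (Fin p) ℝ) (R : Matrix (Fin p) (Fin p) ℝ)
    (x y : Fin n → ℝ) (z : Fin p → ℝ) :
    Sum.elim (Sum.elim x y) (Sum.elim 0 z) ⬝ᵥ
        (dissipWeight P Q S R *ᵥ Sum.elim (Sum.elim x y) (Sum.elim 0 z)) =
      y ⬝ᵥ (P *ᵥ y) - x ⬝ᵥ (P *ᵥ x) + z ⬝ᵥ (R *ᵥ z) := by
  simp only [dissipWeight, fromBlocks_mulVec, Sum.elim_comp_inl, Sum.elim_comp_inr, neg_mulVec,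
    zero_mulVec, mulVec_zero, add_zero, zero_add, sumElim_dotProduct_sumElim, dotProduct_neg,
    zero_dotProduct, add_left_inj]
  ring

theorem posDef_sub_of_dissipLMI {n m p : ℕ} {A : Matrix (Fin n) (Fin n) ℝ}
    {B : Matrix (Fin n) (Fin m) ℝ} {C : Matrix (Fin p) (Fin n) ℝ} {D : Matrix (Fin p) (Fin m) ℝ}
    {P : Matrix (Fin n) (Fin n) ℝ} {Q : Matrix (Fin m) (Fin m) ℝ} {S : Matrix (Fin m) (Fin p) ℝ}
    {R : Matrix (Fin p) (Fin p) ℝ} (hP : P.IsHermitian) (hR : R.PosSemidef)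
    (hLMI : (-((stackIO A B C D)ᵀ * dissipWeight P Q S R * stackIO A B C D)).PosDef) :
    (P - Aᵀ * P * A).PosDef := by
  have hAPA : (Aᵀ * P * A).IsHermitian := by
    simpa using isHermitian_conjTranspose_mul_mul A hP
  refine .of_dotProduct_mulVec_pos (hP.sub hAPA) fun x hx => ?_
  have hx0 : Sum.elim x (0 : Fin m → ℝ) ≠ 0 := fun h => hx (funext fun i => congrFun h (.inl i))
  have hLMIx := hLMI.dotProduct_mulVec_pos hx0
  rw [star_trivial, neg_mulVec, dotProduct_neg, neg_pos, dotProduct_transpose_mul_mul_mulVec_s4,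
    stackIO_mulVec_sumElim_zero, dotProduct_dissipWeight_mulVec] at hLMIx
  have hRx := hR.dotProduct_mulVec_nonneg (C *ᵥ x)
  rw [star_trivial] at hRx ⊢
  rw [sub_mulVec, dotProduct_sub, dotProduct_transpose_mul_mul_mulVec_s4]
  linarith

theorem Matrix.conjTranspose_map_algebraMap {𝕜 m n : Type*} [RCLike 𝕜] (A : Matrix m n ℝ) :
    (A.map (algebraMap ℝ 𝕜))ᴴ = Aᵀ.map (algebraMap ℝ 𝕜) := by
  rw [← conjTranspose_eq_transpose_of_trivial, conjTranspose_map _ (fun x => by simp)]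

open scoped MatrixOrder in
theorem Matrix.PosDef.map_algebraMap {𝕜 n : Type*} [RCLike 𝕜] [Fintype n] [DecidableEq n]
    {M : Matrix n n ℝ} (hM : M.PosDef) : (M.map (algebraMap ℝ 𝕜)).PosDef := by
  obtain ⟨B, rfl⟩ := CStarAlgebra.nonneg_iff_eq_star_mul_self.mp hM.posSemidef.nonneg
  have hsemi : ((star B * B).map (algebraMap ℝ 𝕜)).PosSemidef := by
    rw [Matrix.map_mul, star_eq_conjTranspose, conjTranspose_eq_transpose_of_trivial,
      ← conjTranspose_map_algebraMap]
    exact posSemidef_conjTranspose_mul_self _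
  rw [hsemi.posDef_iff_det_ne_zero, ← RingHom.mapMatrix_apply, ← RingHom.map_det]
  simpa using hM.det_pos.ne'

theorem Matrix.norm_lt_one_of_mem_spectrum_of_posDef_sub {𝕜 n : Type*} [RCLike 𝕜]
    [Fintype n] [DecidableEq n] {A P : Matrix n n 𝕜} (hP : P.PosDef)
    (hL : (P - Aᴴ * P * A).PosDef) {lam : 𝕜} (hlam : lam ∈ spectrum 𝕜 A) : ‖lam‖ < 1 := by
  rw [← spectrum_toLin', ← Module.End.hasEigenvalue_iff_mem_spectrum] at hlam
  obtain ⟨v, hv⟩ := hlam.exists_hasEigenvector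
  have hAv : A *ᵥ v = lam • v := hv.apply_eq_smul
  have hform : star v ⬝ᵥ ((P - Aᴴ * P * A) *ᵥ v)
      = (1 - (‖lam‖ : 𝕜) ^ 2) * (star v ⬝ᵥ (P *ᵥ v)) := by
    rw [sub_mulVec, dotProduct_sub, dotProduct_conjTranspose_mul_mul_mulVec, hAv, mulVec_smul,
      star_smul, smul_dotProduct, dotProduct_smul, smul_smul, smul_eq_mul, RCLike.star_def,
      RCLike.conj_mul]
    ring
  have hq := RCLike.pos_iff.mp (hP.dotProduct_mulVec_pos hv.2)
  have hl := RCLike.pos_iff.mp (hL.dotProduct_mulVec_pos hv.2)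
  rw [hform] at hl
  have h1 : 0 < (1 - ‖lam‖ ^ 2) * RCLike.re (star v ⬝ᵥ (P *ᵥ v)) := by
    simpa [RCLike.mul_re, hq.2] using hl.1
  have h2 : ‖lam‖ ^ 2 < 1 := by linarith [(pos_iff_pos_of_mul_pos h1).mpr hq.1]
  exact (sq_lt_one_iff₀ (norm_nonneg lam)).mp h2

theorem dissip_LMI_implies_lyapunov_and_schur_stability_general (n m p : ℕ)
    (A : Matrix (Fin n) (Fin n) ℝ) (B : Matrix (Fin n) (Fin m) ℝ)
    (C : Matrix (Fin p) (Fin n) ℝ) (D : Matrix (Fin p) (Fin m) ℝ)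
    (P : Matrix (Fin n) (Fin n) ℝ) (hP : P.PosDef)
    (Q : Matrix (Fin m) (Fin m) ℝ)
    (S : Matrix (Fin m) (Fin p) ℝ)
    (R : Matrix (Fin p) (Fin p) ℝ) (hR : R.PosSemidef)
    (hLMI : (-((stackIO A B C D)ᵀ * dissipWeight P Q S R * stackIO A B C D)).PosDef) :
    (-(Aᵀ * P * A - P)).PosDef ∧
      ∀ lam ∈ spectrum ℂ (A.map (algebraMap ℝ ℂ)), ‖lam‖ < 1 := by
  have hLyap : (P - Aᵀ * P * A).PosDef := posDef_sub_of_dissipLMI hP.isHermitian hR hLMI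
  refine ⟨by rwa [neg_sub], fun lam hlam => ?_⟩
  refine norm_lt_one_of_mem_spectrum_of_posDef_sub (hP.map_algebraMap (𝕜 := ℂ)) ?_ hlam
  have hLyapℂ := hLyap.map_algebraMap (𝕜 := ℂ)
  rwa [Matrix.map_sub _ (map_sub _), Matrix.map_mul, Matrix.map_mul,
    ← conjTranspose_map_algebraMap] at hLyapℂ

/-- If `P ≻ 0`, `R ⪰ 0` and the dissipativity LMI
`col(I 0; A B; 0 I; C D)ᵀ blockdiag(−P,P,[[Q,S],[Sᵀ,R]]) col(…) ≺ 0` holds, then the Lyapunov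
inequality `AᵀPA − P ≺ 0` holds and every complex eigenvalue `λ` of `A` satisfies `|λ| < 1`. -/
theorem dissip_LMI_implies_lyapunov_and_schur_stability (n m p : ℕ)
    (A : Matrix (Fin n) (Fin n) ℝ) (B : Matrix (Fin n) (Fin m) ℝ)
    (C : Matrix (Fin p) (Fin n) ℝ) (D : Matrix (Fin p) (Fin m) ℝ)
    (P : Matrix (Fin n) (Fin n) ℝ) (hP : P.PosDef)
    (Q : Matrix (Fin m) (Fin m) ℝ) (hQ : Q.IsSymm)
    (S : Matrix (Fin m) (Fin p) ℝ)
    (R : Matrix (Fin p) (Fin p) ℝ) (hR : R.PosSemidef)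
    (hLMI : (-((stackIO A B C D)ᵀ * dissipWeight P Q S R * stackIO A B C D)).PosDef) :
    (-(Aᵀ * P * A - P)).PosDef ∧
      ∀ lam ∈ spectrum ℂ (A.map (algebraMap ℝ ℂ)), ‖lam‖ < 1 :=
  dissip_LMI_implies_lyapunov_and_schur_stability_general n m p A B C D P hP Q S R hR hLMI
end

section
/- The pair (G, B₀) ∈ ℝ^{p×ñ} × ℝ^{p×m} belongs to Σ (i.e., Y = G X_d + B₀ U + B_w W for some W ∈ ℝ^{m_w×N} satisfying Φ₁₁ + Φ₁₂Wᵀ + WΦ₁₂ᵀ + WΦ₂₂Wᵀ ⪰ 0) if and only if col(I_p, Gᵀ, B₀ᵀ)ᵀ H col(I_p, Gᵀ, B₀ᵀ) ⪰ 0, where H := M Φ Mᵀ with M := [[B_w, Y],[0, −X_d],[0, −U]] ∈ ℝ^{(p+ñ+m)×(m_w+N)}. -/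
/-!
With `E := Y - G X_d - B₀ U`, the congruence by `col(I, Gᵀ, B₀ᵀ)` turns `H` into
`[B_w, E] Φ [B_w, E]ᵀ`. When `E = B_w W` this is `B_w (col(I, Wᵀ)ᵀ Φ col(I, Wᵀ)) B_wᵀ`, which is
semidefinite iff the inner factor is, since `B_w` has a left inverse. It remains to produce `W`
from the QMI: for `x ∈ ker B_wᵀ` the QMI reads `(Eᵀx)ᵀ Φ₂₂ (Eᵀx) ≥ 0`, so `Φ₂₂ ≺ 0` forces
`Eᵀx = 0`, and the columns of `E` lie in `(ker B_wᵀ)ᗮ = range B_w`.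
-/

open Matrix

/-- The data matrix `M := [[B_w, Y],[0, −X_d],[0, −U]]`. -/
noncomputable def dataMat {p m mw nt N : ℕ}
    (Y : Matrix (Fin p) (Fin N) ℝ) (Xd : Matrix (Fin nt) (Fin N) ℝ)
    (U : Matrix (Fin m) (Fin N) ℝ) (Bw : Matrix (Fin p) (Fin mw) ℝ) :
    Matrix (Fin p ⊕ (Fin nt ⊕ Fin m)) (Fin mw ⊕ Fin N) ℝ :=
  fromRows (fromCols Bw Y)
    (fromRows (fromCols (0 : Matrix (Fin nt) (Fin mw) ℝ) (-Xd))
      (fromCols (0 : Matrix (Fin m) (Fin mw) ℝ) (-U)))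

namespace Matrix

variable {k m n : Type*} [Fintype k] [Fintype m] [Fintype n]

theorem isUnit_of_rank_eq_card {K : Type*} [Field K] [DecidableEq n] {A : Matrix n n K}
    (h : A.rank = Fintype.card n) : IsUnit A := by
  rw [← mulVec_surjective_iff_isUnit, ← coe_mulVecLin, ← LinearMap.range_eq_top]
  apply Submodule.eq_top_of_finrank_eq
  rw [← rank, h, Module.finrank_fintype_fun_eq_card]

theorem isUnit_transpose_mul_self_of_rank_eq_card [DecidableEq n] {A : Matrix m n ℝ}
    (h : A.rank = Fintype.card n) : IsUnit (Aᵀ * A) :=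
  isUnit_of_rank_eq_card (by rw [rank_transpose_mul_self, h])

section Quadratic

variable {l R : Type*} [CommRing R] [DecidableEq m]
  (W : Matrix m n R) (P₁₁ : Matrix m m R) (P₁₂ : Matrix m n R) (P₂₂ : Matrix n n R)

theorem fromCols_one_mul_fromBlocks_mul_transpose :
    fromCols (1 : Matrix m m R) W * fromBlocks P₁₁ P₁₂ P₁₂ᵀ P₂₂ * (fromCols (1 : Matrix m m R) W)ᵀ
      = P₁₁ + P₁₂ * Wᵀ + W * P₁₂ᵀ + W * P₂₂ * Wᵀ := by
  rw [fromCols_mul_fromBlocks, transpose_fromCols, fromCols_mul_fromRows]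
  simp only [Matrix.one_mul, transpose_one, Matrix.mul_one, Matrix.add_mul]
  abel

theorem fromCols_self_mul_mul_fromBlocks_mul_transpose (A : Matrix l m R) :
    fromCols A (A * W) * fromBlocks P₁₁ P₁₂ P₁₂ᵀ P₂₂ * (fromCols A (A * W))ᵀ
      = A * (P₁₁ + P₁₂ * Wᵀ + W * P₁₂ᵀ + W * P₂₂ * Wᵀ) * Aᵀ := by
  have hfactor : fromCols A (A * W) = A * fromCols 1 W := by
    rw [mul_fromCols, Matrix.mul_one]
  rw [hfactor, transpose_mul, ← fromCols_one_mul_fromBlocks_mul_transpose]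
  simp only [Matrix.mul_assoc]

end Quadratic

theorem PosSemidef.of_mul_mul_transpose [DecidableEq k] {A : Matrix m k ℝ} {L : Matrix k m ℝ}
    (hLA : L * A = 1) {Q : Matrix k k ℝ} (hQ : (A * Q * Aᵀ).PosSemidef) : Q.PosSemidef := by
  have := hQ.mul_mul_conjTranspose_same L
  rwa [conjTranspose_eq_transpose_of_trivial, ← Matrix.mul_assoc, ← Matrix.mul_assoc, hLA,
    Matrix.mul_assoc, ← transpose_mul, hLA, transpose_one, Matrix.one_mul, Matrix.mul_one] at this

theorem transpose_mulVec_eq_zero_of_posSemidef {A : Matrix m k ℝ} {E : Matrix m n ℝ}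
    {P₁₁ : Matrix k k ℝ} {P₁₂ : Matrix k n ℝ} {P₂₁ : Matrix n k ℝ} {P₂₂ : Matrix n n ℝ}
    (hP₂₂ : (-P₂₂).PosDef)
    (hQ : (fromCols A E * fromBlocks P₁₁ P₁₂ P₂₁ P₂₂ * (fromCols A E)ᵀ).PosSemidef)
    {x : m → ℝ} (hx : Aᵀ *ᵥ x = 0) : Eᵀ *ᵥ x = 0 := by
  set v := Eᵀ *ᵥ x
  have hKx : (fromCols A E)ᵀ *ᵥ x = Sum.elim (0 : k → ℝ) v := by
    rw [transpose_fromCols, fromRows_mulVec, hx]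
  have hform : x ⬝ᵥ (fromCols A E * fromBlocks P₁₁ P₁₂ P₂₁ P₂₂ * (fromCols A E)ᵀ) *ᵥ x
      = v ⬝ᵥ P₂₂ *ᵥ v := by
    rw [← mulVec_mulVec, ← mulVec_mulVec, dotProduct_mulVec, ← mulVec_transpose, hKx,
      fromBlocks_mulVec, sumElim_dotProduct_sumElim]
    simp
  by_contra hv
  have hneg : v ⬝ᵥ P₂₂ *ᵥ v < 0 := by
    simpa [neg_mulVec] using hP₂₂.dotProduct_mulVec_pos hv
  have := hQ.dotProduct_mulVec_nonneg x
  rw [star_trivial, hform] at this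
  linarith

theorem eq_mul_of_ker_transpose_le [DecidableEq k] {A : Matrix m k ℝ} {E : Matrix m n ℝ}
    (hA : IsUnit (Aᵀ * A)) (hker : ∀ x, Aᵀ *ᵥ x = 0 → Eᵀ *ᵥ x = 0) :
    E = A * ((Aᵀ * A)⁻¹ * Aᵀ * E) := by
  set D := E - A * ((Aᵀ * A)⁻¹ * Aᵀ * E)
  have hAD : Aᵀ * D = 0 := by
    rw [Matrix.mul_sub, ← Matrix.mul_assoc, ← Matrix.mul_assoc, ← Matrix.mul_assoc,
      mul_nonsing_inv _ ((isUnit_iff_isUnit_det _).mp hA), Matrix.one_mul, sub_self]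
  have hED : Eᵀ * D = 0 := by
    classical
    refine ext_of_mulVec_single fun j ↦ ?_
    rw [zero_mulVec, ← mulVec_mulVec]
    exact hker _ (by rw [mulVec_mulVec, hAD, zero_mulVec])
  have hDD : Dᵀ * D = 0 := by
    rw [transpose_sub, Matrix.sub_mul, hED, transpose_mul, Matrix.mul_assoc, hAD,
      Matrix.mul_zero, sub_self]
  rw [← conjTranspose_eq_transpose_of_trivial, conjTranspose_mul_self_eq_zero, sub_eq_zero] at hDD
  exact hDD

end Matrix

theorem transpose_fromRows_one_mul_dataMat {p m mw nt N : ℕ}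
    (Y : Matrix (Fin p) (Fin N) ℝ) (Xd : Matrix (Fin nt) (Fin N) ℝ)
    (U : Matrix (Fin m) (Fin N) ℝ) (Bw : Matrix (Fin p) (Fin mw) ℝ)
    (G : Matrix (Fin p) (Fin nt) ℝ) (B0 : Matrix (Fin p) (Fin m) ℝ) :
    (fromRows (1 : Matrix (Fin p) (Fin p) ℝ) (fromRows Gᵀ B0ᵀ))ᵀ * dataMat Y Xd U Bw
      = fromCols Bw (Y - G * Xd - B0 * U) := by
  rw [dataMat, transpose_fromRows, transpose_one, transpose_fromRows, transpose_transpose,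
    transpose_transpose, fromCols_mul_fromRows, Matrix.one_mul, fromCols_mul_fromRows,
    mul_fromCols, mul_fromCols]
  ext i (j | j) <;> simp [sub_eq_add_neg, add_assoc]

theorem consistency_set_iff_QMI_general (p m mw nt N : ℕ)
    (Y : Matrix (Fin p) (Fin N) ℝ) (Xd : Matrix (Fin nt) (Fin N) ℝ)
    (U : Matrix (Fin m) (Fin N) ℝ)
    (Bw : Matrix (Fin p) (Fin mw) ℝ) (hBw : Bw.rank = mw)
    (Φ11 : Matrix (Fin mw) (Fin mw) ℝ) (Φ12 : Matrix (Fin mw) (Fin N) ℝ)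
    (Φ22 : Matrix (Fin N) (Fin N) ℝ)
    (hΦ22 : (-Φ22).PosDef)
    (G : Matrix (Fin p) (Fin nt) ℝ) (B0 : Matrix (Fin p) (Fin m) ℝ) :
    (∃ W : Matrix (Fin mw) (Fin N) ℝ,
        Y = G * Xd + B0 * U + Bw * W ∧
        (Φ11 + Φ12 * Wᵀ + W * Φ12ᵀ + W * Φ22 * Wᵀ).PosSemidef)
      ↔ ((fromRows (1 : Matrix (Fin p) (Fin p) ℝ) (fromRows Gᵀ B0ᵀ))ᵀ *
          (dataMat Y Xd U Bw * fromBlocks Φ11 Φ12 Φ12ᵀ Φ22 * (dataMat Y Xd U Bw)ᵀ) *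
          fromRows (1 : Matrix (Fin p) (Fin p) ℝ) (fromRows Gᵀ B0ᵀ)).PosSemidef := by
  set E := Y - G * Xd - B0 * U
  have hQMI : (fromRows (1 : Matrix (Fin p) (Fin p) ℝ) (fromRows Gᵀ B0ᵀ))ᵀ *
      (dataMat Y Xd U Bw * fromBlocks Φ11 Φ12 Φ12ᵀ Φ22 * (dataMat Y Xd U Bw)ᵀ) *
      fromRows (1 : Matrix (Fin p) (Fin p) ℝ) (fromRows Gᵀ B0ᵀ)
        = fromCols Bw E * fromBlocks Φ11 Φ12 Φ12ᵀ Φ22 * (fromCols Bw E)ᵀ := by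
    rw [← transpose_fromRows_one_mul_dataMat, transpose_mul, transpose_transpose]
    simp only [Matrix.mul_assoc]
  have hdata (W : Matrix (Fin mw) (Fin N) ℝ) : Y = G * Xd + B0 * U + Bw * W ↔ E = Bw * W := by
    rw [← sub_eq_iff_eq_add', ← sub_sub]
  rw [hQMI]
  constructor
  · rintro ⟨W, hW, hΦW⟩
    rw [(hdata W).1 hW, fromCols_self_mul_mul_fromBlocks_mul_transpose]
    simpa using hΦW.mul_mul_conjTranspose_same Bw
  · intro hQ
    have hGram : IsUnit (Bwᵀ * Bw) :=
      isUnit_transpose_mul_self_of_rank_eq_card (by rw [hBw, Fintype.card_fin])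
    obtain ⟨W, hEW⟩ : ∃ W, E = Bw * W := ⟨_, eq_mul_of_ker_transpose_le hGram fun _ ↦
      transpose_mulVec_eq_zero_of_posSemidef hΦ22 hQ⟩
    refine ⟨W, (hdata W).2 hEW, ?_⟩
    rw [hEW, fromCols_self_mul_mul_fromBlocks_mul_transpose] at hQ
    refine hQ.of_mul_mul_transpose (L := (Bwᵀ * Bw)⁻¹ * Bwᵀ) ?_
    rw [Matrix.mul_assoc, nonsing_inv_mul _ ((isUnit_iff_isUnit_det _).mp hGram)]

/-- **Lemma 3 of the paper.** `(G, B₀)` belongs to the consistency set `Σ` (i.e.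
`Y = G X_d + B₀ U + B_w W` for some disturbance `W` with
`Φ₁₁ + Φ₁₂Wᵀ + WΦ₁₂ᵀ + WΦ₂₂Wᵀ ⪰ 0`) iff
`col(I_p, Gᵀ, B₀ᵀ)ᵀ H col(I_p, Gᵀ, B₀ᵀ) ⪰ 0`, where `H := M Φ Mᵀ` with
`M := [[B_w, Y],[0, −X_d],[0, −U]]`. -/
theorem consistency_set_iff_QMI (p m mw nt N : ℕ)
    (Y : Matrix (Fin p) (Fin N) ℝ) (Xd : Matrix (Fin nt) (Fin N) ℝ)
    (U : Matrix (Fin m) (Fin N) ℝ)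
    (Bw : Matrix (Fin p) (Fin mw) ℝ) (hBw : Bw.rank = mw)
    (Φ11 : Matrix (Fin mw) (Fin mw) ℝ) (Φ12 : Matrix (Fin mw) (Fin N) ℝ)
    (Φ22 : Matrix (Fin N) (Fin N) ℝ)
    (hΦ11 : Φ11.IsSymm) (hΦ22 : (-Φ22).PosDef)
    (G : Matrix (Fin p) (Fin nt) ℝ) (B0 : Matrix (Fin p) (Fin m) ℝ) :
    (∃ W : Matrix (Fin mw) (Fin N) ℝ,
        Y = G * Xd + B0 * U + Bw * W ∧
        (Φ11 + Φ12 * Wᵀ + W * Φ12ᵀ + W * Φ22 * Wᵀ).PosSemidef)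
      ↔ ((fromRows (1 : Matrix (Fin p) (Fin p) ℝ) (fromRows Gᵀ B0ᵀ))ᵀ *
          (dataMat Y Xd U Bw * fromBlocks Φ11 Φ12 Φ12ᵀ Φ22 * (dataMat Y Xd U Bw)ᵀ) *
          fromRows (1 : Matrix (Fin p) (Fin p) ℝ) (fromRows Gᵀ B0ᵀ)).PosSemidef :=
  consistency_set_iff_QMI_general p m mw nt N Y Xd U Bw hBw Φ11 Φ12 Φ22 hΦ22 G B0
end

section
/- Let Φ = [[Φ₁₁, Φ₁₂],[Φ₁₂ᵀ, Φ₂₂]] ∈ ℝ^{(m_w+N)×(m_w+N)} be symmetric with Φ₁₁ ∈ ℝ^{m_w×m_w} and Φ₂₂ ≺ 0. Then the set {W ∈ ℝ^{m_w×N} : Φ₁₁ + Φ₁₂Wᵀ + WΦ₁₂ᵀ + WΦ₂₂Wᵀ ⪰ 0} is a bounded subset of ℝ^{m_w×N} (e.g., bounded in Frobenius norm). -/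
/-!
Row `i` of `W` is controlled by the diagonal entry `(i, i)` of the positive semidefinite matrix,
which reads `Φ₁₁ᵢᵢ + 2 ⟪Φ₁₂ᵢ, Wᵢ⟫ + Wᵢᵀ Φ₂₂ Wᵢ ≥ 0`. Since `-Φ₂₂ ⪰ c I` for some `c > 0`
(minimise the quadratic form on the compact unit sphere), this gives
`c ‖Wᵢ‖² ≤ Φ₁₁ᵢᵢ + 2 ⟪Φ₁₂ᵢ, Wᵢ⟫`, and completing the square (`0 ≤ ‖c Wᵢ - 2 Φ₁₂ᵢ‖²`)
bounds `c² ‖Wᵢ‖²` by `2 c Φ₁₁ᵢᵢ + 4 ‖Φ₁₂ᵢ‖²`.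
-/

open Matrix

theorem exists_pos_mul_norm_sq_le_of_homogeneous {E : Type*} [NormedAddCommGroup E]
    [NormedSpace ℝ E] [FiniteDimensional ℝ E] {Q : E → ℝ} (hQ : Continuous Q)
    (hsmul : ∀ (t : ℝ) (x : E), Q (t • x) = t ^ 2 * Q x) (hpos : ∀ x ≠ 0, 0 < Q x) :
    ∃ c > 0, ∀ x, c * ‖x‖ ^ 2 ≤ Q x := by
  have hQ0 : Q 0 = 0 := by simpa using hsmul 0 0
  rcases subsingleton_or_nontrivial E with hE | hE
  · exact ⟨1, one_pos, fun x => by simp [Subsingleton.elim x 0, hQ0]⟩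
  obtain ⟨u, hu, hmin⟩ := (isCompact_sphere (0 : E) 1).exists_isMinOn
    (NormedSpace.sphere_nonempty.mpr zero_le_one) hQ.continuousOn
  refine ⟨Q u, hpos u (ne_zero_of_mem_unit_sphere ⟨u, hu⟩), fun x => ?_⟩
  rcases eq_or_ne x 0 with rfl | hx
  · simp [hQ0]
  have hx' : ‖x‖ ≠ 0 := norm_ne_zero_iff.mpr hx
  have hunit : ‖x‖⁻¹ • x ∈ Metric.sphere (0 : E) 1 := by simp [norm_smul, hx']
  calc Q u * ‖x‖ ^ 2 ≤ Q (‖x‖⁻¹ • x) * ‖x‖ ^ 2 := by gcongr; exact hmin hunit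
    _ = Q x := by
      rw [hsmul, inv_pow, mul_comm, ← mul_assoc, mul_inv_cancel₀ (pow_ne_zero 2 hx'), one_mul]

theorem Matrix.PosDef.exists_pos_mul_dotProduct_self_le {n : Type*} [Fintype n]
    {A : Matrix n n ℝ} (hA : A.PosDef) :
    ∃ c > 0, ∀ x : n → ℝ, c * (x ⬝ᵥ x) ≤ x ⬝ᵥ A *ᵥ x := by
  obtain ⟨c, hc, hQ⟩ := exists_pos_mul_norm_sq_le_of_homogeneous
    (Q := fun x : EuclideanSpace ℝ n => x.ofLp ⬝ᵥ A *ᵥ x.ofLp) (by fun_prop)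
    (fun t x => by simp [mulVec_smul]; ring)
    (fun x hx => by simpa using hA.dotProduct_mulVec_pos (x := x.ofLp) (by simpa using hx))
  refine ⟨c, hc, fun x => ?_⟩
  have hx := hQ (WithLp.toLp 2 x)
  rw [EuclideanSpace.real_norm_sq_eq] at hx
  simpa [dotProduct, sq] using hx

theorem Matrix.quadratic_apply_self {m n : Type*} [Fintype n] (A : Matrix m m ℝ)
    (B W : Matrix m n ℝ) (C : Matrix n n ℝ) (i : m) :
    (A + B * Wᵀ + W * Bᵀ + W * C * Wᵀ) i i = A i i + 2 * (B i ⬝ᵥ W i) + W i ⬝ᵥ C *ᵥ W i := by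
  simp only [add_apply, mul_apply', transpose_apply, mul_apply_eq_vecMul, dotProduct_mulVec]
  rw [dotProduct_comm (W i)]
  ring

theorem sq_mul_dotProduct_self_le {n : Type*} [Fintype n] {c a : ℝ} {p w : n → ℝ}
    (hc : 0 < c) (h : c * (w ⬝ᵥ w) ≤ a + 2 * (p ⬝ᵥ w)) :
    c ^ 2 * (w ⬝ᵥ w) ≤ 2 * c * a + 4 * (p ⬝ᵥ p) := by
  have hsq : 0 ≤ (c • w - (2 : ℝ) • p) ⬝ᵥ (c • w - (2 : ℝ) • p) := dotProduct_self_star_nonneg _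
  simp only [sub_dotProduct, dotProduct_sub, smul_dotProduct, dotProduct_smul, smul_eq_mul,
    dotProduct_comm w p] at hsq
  nlinarith [mul_le_mul_of_nonneg_left h hc.le]

theorem disturbance_set_bounded_general (mw N : ℕ)
    (Φ11 : Matrix (Fin mw) (Fin mw) ℝ) (Φ12 : Matrix (Fin mw) (Fin N) ℝ)
    (Φ22 : Matrix (Fin N) (Fin N) ℝ)
    (hΦ22 : (-Φ22).PosDef) :
    ∃ c : ℝ, ∀ W : Matrix (Fin mw) (Fin N) ℝ,
      (Φ11 + Φ12 * Wᵀ + W * Φ12ᵀ + W * Φ22 * Wᵀ).PosSemidef →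
      Real.sqrt (∑ i, ∑ j, (W i j) ^ 2) ≤ c := by
  obtain ⟨c, hc, hcoercive⟩ := hΦ22.exists_pos_mul_dotProduct_self_le
  refine ⟨√(∑ i, (2 * c * Φ11 i i + 4 * (Φ12 i ⬝ᵥ Φ12 i)) / c ^ 2), fun W hW => ?_⟩
  refine Real.sqrt_le_sqrt (Finset.sum_le_sum fun i _ => ?_)
  have hrow : c * (W i ⬝ᵥ W i) ≤ Φ11 i i + 2 * (Φ12 i ⬝ᵥ W i) := by
    have hdiag := hW.diag_nonneg (i := i)
    have hneg := hcoercive (W i)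
    rw [quadratic_apply_self] at hdiag
    rw [neg_mulVec, dotProduct_neg] at hneg
    linarith
  rw [le_div_iff₀ (by positivity), mul_comm]
  simpa [dotProduct, sq] using sq_mul_dotProduct_self_le hc hrow

/-- If `Φ` is symmetric with `Φ₂₂ ≺ 0`, then the set of matrices `W` satisfying the quadratic
matrix inequality `Φ₁₁ + Φ₁₂Wᵀ + WΦ₁₂ᵀ + WΦ₂₂Wᵀ ⪰ 0` is bounded (in Frobenius norm). -/
theorem disturbance_set_bounded (mw N : ℕ)
    (Φ11 : Matrix (Fin mw) (Fin mw) ℝ) (Φ12 : Matrix (Fin mw) (Fin N) ℝ)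
    (Φ22 : Matrix (Fin N) (Fin N) ℝ)
    (hΦ11 : Φ11.IsSymm) (hΦ22 : (-Φ22).PosDef) :
    ∃ c : ℝ, ∀ W : Matrix (Fin mw) (Fin N) ℝ,
      (Φ11 + Φ12 * Wᵀ + W * Φ12ᵀ + W * Φ22 * Wᵀ).PosSemidef →
      Real.sqrt (∑ i, ∑ j, (W i j) ^ 2) ≤ c :=
  disturbance_set_bounded_general mw N Φ11 Φ12 Φ22 hΦ22
end

section
/- Let Ã ∈ ℝ^{ñ×ñ}, B̃ ∈ ℝ^{ñ×m_w}, C̃ ∈ ℝ^{p_z×ñ}, D̃ ∈ ℝ^{p_z×m_w}. Let P ∈ ℝ^{ñ×ñ} be symmetric with P ≻ 0, and let Π := [[Q, S],[Sᵀ, R]] ∈ ℝ^{(m_w+p_z)×(m_w+p_z)} be symmetric and invertible with R ⪰ 0. Write P̃ := P⁻¹ and Π⁻¹ =: [[Q̃, S̃],[S̃ᵀ, R̃]] with Q̃ ∈ ℝ^{m_w×m_w}. Then col(I_ñ 0; Ã B̃; 0 I_{m_w}; C̃ D̃)ᵀ · blockdiag(−P, P, Π) · col(I_ñ 0; Ã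 B̃; 0 I_{m_w}; C̃ D̃) ≺ 0 if and only if Q̃ ⪯ 0 and col(Ãᵀ C̃ᵀ; −I_ñ 0; B̃ᵀ D̃ᵀ; 0 −I_{p_z})ᵀ · blockdiag(−P̃, P̃, [[Q̃, S̃],[S̃ᵀ, R̃]]) · col(Ãᵀ C̃ᵀ; −I_ñ 0; B̃ᵀ D̃ᵀ; 0 −I_{p_z}) ≻ 0. -/
/-!
Put `W := blockdiag(-P, P, Π)`, so that `W⁻¹ = blockdiag(-P̃, P̃, Π⁻¹)`, and let `U`, `V` be the
primal and dual stacks; both are injective and `Uᵀ V = 0`. A nondegenerate symmetric form cannot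
be negative semidefinite on one subspace and positive semidefinite on another whose dimensions add
up to more than the whole dimension. `W` is positive semidefinite on the `(ñ + p_z)`-dimensional
space of vectors `(0, x, 0, z)`, so if `W` is negative definite on `im U` (dimension `ñ + m_w`), it
is positive definite on the `W`-orthogonal complement of `im U`, which contains `W⁻¹ (im V)`: that
is the dual inequality. The same count gives `uᵀ Q̃ u ≤ 0`, the `W`-value of `W⁻¹ (0, 0, u, 0)`,
a vector `W`-orthogonal to all `(0, x, 0, z)`. The converse is the same argument for `-W⁻¹`, with
`U` and `V` exchanged and the vectors `(x, 0, u, 0)`, on which `-W⁻¹ = blockdiag(P̃, -Q̃)` is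
positive semidefinite.
-/

open Matrix

/-- The dual stacked matrix `col(Aᵀ Cᵀ; −I 0; Bᵀ Dᵀ; 0 −I)`. -/
noncomputable def stackDual {n m p : ℕ}
    (A : Matrix (Fin n) (Fin n) ℝ) (B : Matrix (Fin n) (Fin m) ℝ)
    (C : Matrix (Fin p) (Fin n) ℝ) (D : Matrix (Fin p) (Fin m) ℝ) :
    Matrix ((Fin n ⊕ Fin n) ⊕ (Fin m ⊕ Fin p)) (Fin n ⊕ Fin p) ℝ :=
  fromRows
    (fromRows (fromCols Aᵀ Cᵀ)
      (fromCols (-(1 : Matrix (Fin n) (Fin n) ℝ)) (0 : Matrix (Fin n) (Fin p) ℝ)))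
    (fromRows (fromCols Bᵀ Dᵀ)
      (fromCols (0 : Matrix (Fin p) (Fin n) ℝ) (-(1 : Matrix (Fin p) (Fin p) ℝ))))

open Module

namespace LinearMap.BilinForm

variable {M : Type*} [AddCommGroup M] [Module ℝ M] {B : LinearMap.BilinForm ℝ M}

lemma apply_self_add_smul (hB : B.IsSymm) (x y : M) (t : ℝ) :
    B (x + t • y) (x + t • y) = B x x + 2 * t * B x y + t ^ 2 * B y y := by
  simp only [map_add, map_smul, LinearMap.add_apply, LinearMap.smul_apply, smul_eq_mul,
    hB.eq y x]
  ring

lemma apply_eq_zero_of_apply_self_eq_zero (hB : B.IsSymm) {P : Submodule ℝ M}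
    (hP : ∀ x ∈ P, 0 ≤ B x x) {x y : M} (hx : x ∈ P) (hy : y ∈ P) (hxx : B x x = 0) :
    B y x = 0 := by
  have hline (t : ℝ) : 0 ≤ B y y + 2 * t * B y x := by
    have := hP _ (P.add_mem hy (P.smul_mem t hx))
    rw [apply_self_add_smul hB, hxx] at this
    linarith
  by_contra hyx
  have := hline (-(B y y + 1) / (2 * B y x))
  field_simp at this
  linarith

lemma apply_self_nonneg_of_mem_sup_span_singleton (hB : B.IsSymm) {P : Submodule ℝ M}
    (hP : ∀ x ∈ P, 0 ≤ B x x) {e : M} (he : 0 ≤ B e e) (hPe : ∀ x ∈ P, B x e = 0)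
    {x : M} (hx : x ∈ P ⊔ Submodule.span ℝ {e}) : 0 ≤ B x x := by
  obtain ⟨p, hp, _, ht, rfl⟩ := Submodule.mem_sup.mp hx
  obtain ⟨t, rfl⟩ := Submodule.mem_span_singleton.mp ht
  rw [apply_self_add_smul hB, hPe p hp]
  have := hP p hp
  have := mul_nonneg (sq_nonneg t) he
  linarith

variable [FiniteDimensional ℝ M]

theorem finrank_add_finrank_le_of_nonpos_of_nonneg (hB : B.IsSymm) (hB' : B.Nondegenerate)
    {S P : Submodule ℝ M} (hS : ∀ x ∈ S, B x x ≤ 0) (hP : ∀ x ∈ P, 0 ≤ B x x) :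
    finrank ℝ S + finrank ℝ P ≤ finrank ℝ M := by
  have hS' : ∀ x ∈ S, 0 ≤ (-B) x x := fun x hx => by simpa using hS x hx
  -- a vector of `S ⊓ P` is isotropic, hence in the radical of `B` restricted to `S` and to `P`
  have hradical : S ⊓ P ≤ B.orthogonal (S ⊔ P) := by
    rintro x ⟨hxS, hxP⟩ _ hy
    have hxx : B x x = 0 := le_antisymm (hS x hxS) (hP x hxP)
    obtain ⟨s, hs, p, hp, rfl⟩ := Submodule.mem_sup.mp hy
    have hsx : B s x = 0 := by
      simpa using apply_eq_zero_of_apply_self_eq_zero hB.neg hS' hxS hs (by simp [hxx])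
    simp [hsx, apply_eq_zero_of_apply_self_eq_zero hB hP hxP hp hxx]
  have := Submodule.finrank_mono hradical
  rw [finrank_orthogonal hB'] at this
  have := Submodule.finrank_sup_add_finrank_inf_eq S P
  have := Submodule.finrank_le (S ⊔ P)
  omega

theorem apply_self_neg_of_forall_apply_eq_zero (hB : B.IsSymm) (hB' : B.Nondegenerate)
    {S P : Submodule ℝ M} (hS : ∀ x ∈ S, B x x ≤ 0) (hP : ∀ x ∈ P, 0 ≤ B x x)
    (hdim : finrank ℝ M ≤ finrank ℝ S + finrank ℝ P)
    {e : M} (hPe : ∀ x ∈ P, B x e = 0) (heP : e ∉ P) : B e e < 0 := by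
  by_contra! he
  have := finrank_add_finrank_le_of_nonpos_of_nonneg hB hB' hS
    (fun x => apply_self_nonneg_of_mem_sup_span_singleton hB hP he hPe)
  rw [Submodule.finrank_sup_span_singleton heP] at this
  omega

theorem apply_self_pos_of_forall_apply_eq_zero (hB : B.IsSymm) (hB' : B.Nondegenerate)
    {U P : Submodule ℝ M} (hU : ∀ x ∈ U, x ≠ 0 → B x x < 0) (hP : ∀ x ∈ P, 0 ≤ B x x)
    (hdim : finrank ℝ M ≤ finrank ℝ U + finrank ℝ P)
    {v : M} (hUv : ∀ x ∈ U, B x v = 0) (hv : v ≠ 0) : 0 < B v v := by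
  have hvU : v ∉ U := fun hvU => (hU v hvU hv).ne (hUv v hvU)
  by_contra! hvv
  have hU' : ∀ x ∈ U, 0 ≤ (-B) x x := fun x hx => by
    rcases eq_or_ne x 0 with rfl | hx0
    · simp
    · simpa using (hU x hx hx0).le
  have := finrank_add_finrank_le_of_nonpos_of_nonneg hB hB' (S := U ⊔ Submodule.span ℝ {v})
    (fun x hx => by
      simpa using apply_self_nonneg_of_mem_sup_span_singleton hB.neg hU' (by simpa using hvv)
        (fun y hy => by simpa using hUv y hy) hx) hP
  rw [Submodule.finrank_sup_span_singleton hvU] at this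
  omega

end LinearMap.BilinForm

namespace Matrix

open LinearMap.BilinForm

variable {ι κ τ μ ν : Type*} [Fintype ι] [DecidableEq ι] [Fintype κ] [Fintype τ] [Fintype μ]
  [Fintype ν]

lemma IsSymm.of_mul_eq_one {W W' : Matrix ι ι ℝ} (hW : W.IsSymm) (hWW' : W * W' = 1) :
    W'.IsSymm := by
  rw [← inv_eq_right_inv hWW']
  exact hW.inv

lemma toBilin'_apply_mulVec_of_mul_eq_one {W W' : Matrix ι ι ℝ} (hWW' : W * W' = 1)
    (x v : ι → ℝ) : W.toBilin' x (W' *ᵥ v) = x ⬝ᵥ v := by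
  rw [toBilin'_apply', mulVec_mulVec, hWW', one_mulVec]

omit [DecidableEq ι] in
lemma dotProduct_transpose_mul_mul_mulVec_s11 (T : Matrix ι τ ℝ) (W : Matrix ι ι ℝ) (c : τ → ℝ) :
    c ⬝ᵥ (Tᵀ * W * T) *ᵥ c = (T *ᵥ c) ⬝ᵥ W *ᵥ (T *ᵥ c) := by
  rw [← mulVec_mulVec, ← mulVec_mulVec, dotProduct_mulVec, vecMul_transpose]

omit [DecidableEq ι] in
lemma mulVec_dotProduct_mulVec_eq_zero {A : Matrix ι κ ℝ} {B : Matrix ι τ ℝ} (h : Aᵀ * B = 0)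
    (x : κ → ℝ) (y : τ → ℝ) : (A *ᵥ x) ⬝ᵥ (B *ᵥ y) = 0 := by
  rw [← vecMul_transpose, ← dotProduct_mulVec, mulVec_mulVec, h, zero_mulVec, dotProduct_zero]

omit [DecidableEq ι] in
lemma injective_mulVec_of_mul_eq_one [DecidableEq τ] {L : Matrix τ ι ℝ} {T : Matrix ι τ ℝ}
    (h : L * T = 1) : Function.Injective T.mulVec := fun x y hxy => by
  simpa [mulVec_mulVec, h] using congrArg (L *ᵥ ·) hxy

omit [DecidableEq ι] in
lemma injective_mulVec_of_posDef_transpose_mul_mul {T : Matrix ι τ ℝ} {W : Matrix ι ι ℝ}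
    (hT : (Tᵀ * W * T).PosDef) : Function.Injective T.mulVec := by
  intro a b hab
  by_contra hne
  have := hT.dotProduct_mulVec_pos (sub_ne_zero.mpr hne)
  rw [star_trivial, dotProduct_transpose_mul_mul_mulVec_s11, mulVec_sub, hab, sub_self] at this
  simp at this

omit [Fintype ι] [DecidableEq ι] in
lemma finrank_range_mulVecLin_of_injective {T : Matrix ι τ ℝ}
    (hT : Function.Injective T.mulVec) :
    finrank ℝ (LinearMap.range T.mulVecLin) = Fintype.card τ := by
  rw [LinearMap.finrank_range_of_inj hT, Module.finrank_fintype_fun_eq_card]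

lemma posSemidef_fromBlocks_zero_iff [DecidableEq κ] {A : Matrix κ κ ℝ} (hA : A.PosDef)
    {D : Matrix τ τ ℝ} : (fromBlocks A 0 0 D).PosSemidef ↔ D.PosSemidef := by
  have := hA.isUnit.invertible
  simpa using PosDef.fromBlocks₁₁ (0 : Matrix κ τ ℝ) D hA

section Dualization

variable {W : Matrix ι ι ℝ} {U : Matrix ι κ ℝ} {T : Matrix ι τ ℝ}

lemma toBilin'_apply_self_neg_of_mem_range (hU : (-(Uᵀ * W * U)).PosDef) {x : ι → ℝ}
    (hx : x ∈ LinearMap.range U.mulVecLin) (hx0 : x ≠ 0) : W.toBilin' x x < 0 := by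
  obtain ⟨c, rfl⟩ := hx
  have hc : c ≠ 0 := by rintro rfl; simp at hx0
  have := hU.dotProduct_mulVec_pos hc
  rw [star_trivial, neg_mulVec, dotProduct_neg, dotProduct_transpose_mul_mul_mulVec_s11] at this
  rw [toBilin'_apply']
  exact neg_pos.mp this

lemma toBilin'_apply_self_nonneg_of_mem_range (hT : (Tᵀ * W * T).PosSemidef) {x : ι → ℝ}
    (hx : x ∈ LinearMap.range T.mulVecLin) : 0 ≤ W.toBilin' x x := by
  obtain ⟨c, rfl⟩ := hx
  have := hT.dotProduct_mulVec_nonneg c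
  rwa [star_trivial, dotProduct_transpose_mul_mul_mulVec_s11, ← mulVecLin_apply,
    ← toBilin'_apply'] at this

omit [DecidableEq ι] in
lemma finrank_le_finrank_range_add_finrank_range (hU : (-(Uᵀ * W * U)).PosDef)
    (hT : Function.Injective T.mulVec)
    (hcard : Fintype.card ι ≤ Fintype.card κ + Fintype.card τ) :
    finrank ℝ (ι → ℝ) ≤
      finrank ℝ (LinearMap.range U.mulVecLin) + finrank ℝ (LinearMap.range T.mulVecLin) := by
  have hUinj : Function.Injective U.mulVec :=
    injective_mulVec_of_posDef_transpose_mul_mul (W := -W)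
      (by simpa [Matrix.mul_neg, Matrix.neg_mul] using hU)
  rwa [Module.finrank_fintype_fun_eq_card, finrank_range_mulVecLin_of_injective hUinj,
    finrank_range_mulVecLin_of_injective hT]

variable {W' : Matrix ι ι ℝ} (hW : W.IsSymm) (hWW' : W * W' = 1)
  (hU : (-(Uᵀ * W * U)).PosDef) (hT : Function.Injective T.mulVec)
  (hTW : (Tᵀ * W * T).PosSemidef) (hcard : Fintype.card ι ≤ Fintype.card κ + Fintype.card τ)
include hW hWW' hU hT hTW hcard

theorem dualization_posDef {V : Matrix ι μ ℝ} (hUV : Uᵀ * V = 0)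
    (hV : Function.Injective V.mulVec) : (Vᵀ * W' * V).PosDef := by
  have hW' : W'.IsHermitian := isHermitian_iff_isSymm.mpr (hW.of_mul_eq_one hWW')
  refine .of_dotProduct_mulVec_pos (by simpa using isHermitian_conjTranspose_mul_mul V hW')
    fun y hy => ?_
  have hv : W' *ᵥ V *ᵥ y ≠ 0 := by
    intro h
    have : V *ᵥ y = V *ᵥ 0 := by
      simpa [mulVec_mulVec, ← Matrix.mul_assoc, hWW'] using congrArg (W *ᵥ ·) h
    exact hy (hV this)
  have horth : ∀ x ∈ LinearMap.range U.mulVecLin, W.toBilin' x (W' *ᵥ V *ᵥ y) = 0 := by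
    rintro _ ⟨c, rfl⟩
    rw [toBilin'_apply_mulVec_of_mul_eq_one hWW', mulVecLin_apply,
      mulVec_dotProduct_mulVec_eq_zero hUV]
  have := apply_self_pos_of_forall_apply_eq_zero (isSymm_toBilin'_iff_isSymm.mpr hW)
    (nondegenerate_toBilin'_of_det_ne_zero' W (det_ne_zero_of_right_inverse hWW'))
    (fun x hx => toBilin'_apply_self_neg_of_mem_range hU hx)
    (fun x hx => toBilin'_apply_self_nonneg_of_mem_range hTW hx)
    (finrank_le_finrank_range_add_finrank_range hU hT hcard) horth hv
  rw [star_trivial, dotProduct_transpose_mul_mul_mulVec_s11, dotProduct_comm]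
  rwa [toBilin'_apply_mulVec_of_mul_eq_one hWW'] at this

theorem dualization_negSemidef {N : Matrix ι ν ℝ} (hTN : Tᵀ * N = 0) :
    (-(Nᵀ * W' * N)).PosSemidef := by
  have hW' : W'.IsHermitian := isHermitian_iff_isSymm.mpr (hW.of_mul_eq_one hWW')
  refine .of_dotProduct_mulVec_nonneg
    (by simpa using (isHermitian_conjTranspose_mul_mul N hW').neg) fun c => ?_
  rw [star_trivial, neg_mulVec, dotProduct_neg, dotProduct_transpose_mul_mul_mulVec_s11, neg_nonneg,
    dotProduct_comm]
  by_cases he : W' *ᵥ N *ᵥ c ∈ LinearMap.range T.mulVecLin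
  · obtain ⟨d, hd⟩ := he
    rw [← hd, mulVecLin_apply, mulVec_dotProduct_mulVec_eq_zero hTN]
  have hS : ∀ x ∈ LinearMap.range U.mulVecLin, W.toBilin' x x ≤ 0 := fun x hx => by
    rcases eq_or_ne x 0 with rfl | hx0
    · simp
    · exact (toBilin'_apply_self_neg_of_mem_range hU hx hx0).le
  have horth : ∀ x ∈ LinearMap.range T.mulVecLin, W.toBilin' x (W' *ᵥ N *ᵥ c) = 0 := by
    rintro _ ⟨d, rfl⟩
    rw [toBilin'_apply_mulVec_of_mul_eq_one hWW', mulVecLin_apply,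
      mulVec_dotProduct_mulVec_eq_zero hTN]
  have := apply_self_neg_of_forall_apply_eq_zero (isSymm_toBilin'_iff_isSymm.mpr hW)
    (nondegenerate_toBilin'_of_det_ne_zero' W (det_ne_zero_of_right_inverse hWW')) hS
    (fun x hx => toBilin'_apply_self_nonneg_of_mem_range hTW hx)
    (finrank_le_finrank_range_add_finrank_range hU hT hcard) horth he
  rw [toBilin'_apply_mulVec_of_mul_eq_one hWW'] at this
  exact this.le

end Dualization

end Matrix

section StackedMatrices

variable {n m p : ℕ}

lemma isSymm_dissipWeight {P : Matrix (Fin n) (Fin n) ℝ} {Q : Matrix (Fin m) (Fin m) ℝ}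
    (S : Matrix (Fin m) (Fin p) ℝ) {R : Matrix (Fin p) (Fin p) ℝ}
    (hP : P.IsSymm) (hQ : Q.IsSymm) (hR : R.IsSymm) : (dissipWeight P Q S R).IsSymm :=
  .fromBlocks (.fromBlocks hP.neg transpose_zero hP) transpose_zero (.fromBlocks hQ rfl hR)

lemma dissipWeight_mul_dissipWeight {P P' : Matrix (Fin n) (Fin n) ℝ}
    {Q Q' : Matrix (Fin m) (Fin m) ℝ} {S S' : Matrix (Fin m) (Fin p) ℝ}
    {R R' : Matrix (Fin p) (Fin p) ℝ} (hP : P * P' = 1)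
    (hPi : fromBlocks Q S Sᵀ R * fromBlocks Q' S' S'ᵀ R' = 1) :
    dissipWeight P Q S R * dissipWeight P' Q' S' R' = 1 := by
  simp [dissipWeight, fromBlocks_multiply, hP, hPi, fromBlocks_one]

lemma posSemidef_stackDual_zero_transpose_mul_dissipWeight_mul {P : Matrix (Fin n) (Fin n) ℝ}
    (Q : Matrix (Fin m) (Fin m) ℝ) (S : Matrix (Fin m) (Fin p) ℝ) {R : Matrix (Fin p) (Fin p) ℝ}
    (hP : P.PosDef) (hR : R.PosSemidef) :
    ((stackDual 0 0 (0 : Matrix (Fin p) (Fin n) ℝ) (0 : Matrix (Fin p) (Fin m) ℝ))ᵀ *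
      dissipWeight P Q S R *
      stackDual 0 0 (0 : Matrix (Fin p) (Fin n) ℝ) (0 : Matrix (Fin p) (Fin m) ℝ)).PosSemidef := by
  convert (posSemidef_fromBlocks_zero_iff hP).mpr hR using 1
  ext (i | i) (j | j) <;> simp only [mul_apply, Fintype.sum_sum_type] <;>
    simp [stackDual, dissipWeight, one_apply]

lemma posSemidef_neg_stackIO_zero_transpose_mul_dissipWeight_mul_iff
    {P : Matrix (Fin n) (Fin n) ℝ} {Q : Matrix (Fin m) (Fin m) ℝ} (S : Matrix (Fin m) (Fin p) ℝ)
    (R : Matrix (Fin p) (Fin p) ℝ) (hP : P.PosDef) :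
    (-((stackIO 0 0 (0 : Matrix (Fin p) (Fin n) ℝ) (0 : Matrix (Fin p) (Fin m) ℝ))ᵀ *
      dissipWeight P Q S R *
      stackIO 0 0 (0 : Matrix (Fin p) (Fin n) ℝ) (0 : Matrix (Fin p) (Fin m) ℝ))).PosSemidef ↔
      (-Q).PosSemidef := by
  rw [← posSemidef_fromBlocks_zero_iff hP (D := -Q)]
  congr! 1
  ext (i | i) (j | j) <;> simp only [Matrix.neg_apply, mul_apply, Fintype.sum_sum_type] <;>
    simp [stackIO, dissipWeight, one_apply]

variable (A : Matrix (Fin n) (Fin n) ℝ) (B : Matrix (Fin n) (Fin m) ℝ)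
  (C : Matrix (Fin p) (Fin n) ℝ) (D : Matrix (Fin p) (Fin m) ℝ)

lemma stackIO_transpose_mul_stackDual : (stackIO A B C D)ᵀ * stackDual A B C D = 0 := by
  simp [stackIO, stackDual, transpose_fromRows, fromBlocks_transpose, fromCols_mul_fromRows,
    fromBlocks_multiply, fromBlocks_add]

lemma stackDual_transpose_mul_stackIO : (stackDual A B C D)ᵀ * stackIO A B C D = 0 := by
  rw [← transpose_transpose (_ * _), transpose_mul, transpose_transpose,
    stackIO_transpose_mul_stackDual, transpose_zero]

lemma stackIO_zero_transpose_mul_stackIO :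
    (stackIO 0 0 (0 : Matrix (Fin p) (Fin n) ℝ) (0 : Matrix (Fin p) (Fin m) ℝ))ᵀ *
      stackIO A B C D = 1 := by
  ext (i | i) (j | j) <;> rw [mul_apply] <;>
    simp [stackIO, Fintype.sum_sum_type, one_apply, eq_comm]

lemma stackDual_zero_transpose_mul_stackDual :
    (stackDual 0 0 (0 : Matrix (Fin p) (Fin n) ℝ) (0 : Matrix (Fin p) (Fin m) ℝ))ᵀ *
      stackDual A B C D = 1 := by
  ext (i | i) (j | j) <;> rw [mul_apply] <;>
    simp [stackDual, Fintype.sum_sum_type, one_apply, eq_comm]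

lemma injective_mulVec_stackIO : Function.Injective (stackIO A B C D).mulVec :=
  injective_mulVec_of_mul_eq_one (stackIO_zero_transpose_mul_stackIO A B C D)

lemma injective_mulVec_stackDual : Function.Injective (stackDual A B C D).mulVec :=
  injective_mulVec_of_mul_eq_one (stackDual_zero_transpose_mul_stackDual A B C D)

end StackedMatrices

/-- **Primal–dual equivalence of the strict dissipativity LMI (dualization).**
With `P ≻ 0`, `Π = [[Q,S],[Sᵀ,R]]` symmetric invertible, `R ⪰ 0`, `P̃ = P⁻¹` and
`Π⁻¹ = [[Q̃,S̃],[S̃ᵀ,R̃]]`, the LMI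
`col(I 0; Ã B̃; 0 I; C̃ D̃)ᵀ blockdiag(−P,P,Π) col(…) ≺ 0` holds iff `Q̃ ⪯ 0` and
`col(Ãᵀ C̃ᵀ; −I 0; B̃ᵀ D̃ᵀ; 0 −I)ᵀ blockdiag(−P̃,P̃,Π⁻¹) col(…) ≻ 0`. -/
theorem dissip_LMI_dualization (nt mw pz : ℕ)
    (At : Matrix (Fin nt) (Fin nt) ℝ) (Bt : Matrix (Fin nt) (Fin mw) ℝ)
    (Ct : Matrix (Fin pz) (Fin nt) ℝ) (Dt : Matrix (Fin pz) (Fin mw) ℝ)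
    (P : Matrix (Fin nt) (Fin nt) ℝ) (hP : P.PosDef)
    (Q : Matrix (Fin mw) (Fin mw) ℝ) (hQ : Q.IsSymm)
    (S : Matrix (Fin mw) (Fin pz) ℝ)
    (R : Matrix (Fin pz) (Fin pz) ℝ) (hR : R.PosSemidef)
    (hPi : IsUnit (fromBlocks Q S Sᵀ R).det)
    (Qt : Matrix (Fin mw) (Fin mw) ℝ) (St : Matrix (Fin mw) (Fin pz) ℝ)
    (Rt : Matrix (Fin pz) (Fin pz) ℝ)
    (hinv : fromBlocks Qt St Stᵀ Rt = (fromBlocks Q S Sᵀ R)⁻¹) :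
    (-((stackIO At Bt Ct Dt)ᵀ * dissipWeight P Q S R * stackIO At Bt Ct Dt)).PosDef
      ↔ ((-Qt).PosSemidef ∧
        ((stackDual At Bt Ct Dt)ᵀ * dissipWeight P⁻¹ Qt St Rt *
          stackDual At Bt Ct Dt).PosDef) := by
  have hW : (dissipWeight P Q S R).IsSymm :=
    isSymm_dissipWeight S (isHermitian_iff_isSymm.mp hP.1) hQ (isHermitian_iff_isSymm.mp hR.1)
  have hWW' : dissipWeight P Q S R * dissipWeight P⁻¹ Qt St Rt = 1 :=
    dissipWeight_mul_dissipWeight (mul_nonsing_inv P ((isUnit_iff_isUnit_det P).mp hP.isUnit))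
      (hinv ▸ mul_nonsing_inv _ hPi)
  constructor
  · intro hU
    have hTW := posSemidef_stackDual_zero_transpose_mul_dissipWeight_mul Q S hP hR
    have hcard : Fintype.card ((Fin nt ⊕ Fin nt) ⊕ (Fin mw ⊕ Fin pz)) ≤
        Fintype.card (Fin nt ⊕ Fin mw) + Fintype.card (Fin nt ⊕ Fin pz) := by simp; omega
    refine ⟨?_, dualization_posDef hW hWW' hU (injective_mulVec_stackDual 0 0 0 0) hTW hcard
      (stackIO_transpose_mul_stackDual At Bt Ct Dt) (injective_mulVec_stackDual At Bt Ct Dt)⟩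
    exact (posSemidef_neg_stackIO_zero_transpose_mul_dissipWeight_mul_iff St Rt hP.inv).mp
      (dualization_negSemidef hW hWW' hU (injective_mulVec_stackDual 0 0 0 0) hTW hcard
        (stackDual_transpose_mul_stackIO 0 0 0 0))
  · rintro ⟨hQt, hV⟩
    have hTW :=
      (posSemidef_neg_stackIO_zero_transpose_mul_dissipWeight_mul_iff St Rt hP.inv).mpr hQt
    rw [← Matrix.neg_mul, ← Matrix.mul_neg] at hTW
    -- `W'` is named explicitly: inferred through `neg_mul_neg`, its `Neg` instance defeats `simpa`
    have := dualization_posDef (W' := -dissipWeight P Q S R) (hW.of_mul_eq_one hWW').neg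
      (by rw [neg_mul_neg, mul_eq_one_comm.mp hWW']) (by simpa using hV)
      (injective_mulVec_stackIO 0 0 0 0) hTW (by simp; omega)
      (stackDual_transpose_mul_stackIO At Bt Ct Dt) (injective_mulVec_stackIO At Bt Ct Dt)
    simpa [Matrix.mul_neg, Matrix.neg_mul] using this
end
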